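/- arXiv:1707.00373 — 3 statements merged into one kernel-verified Lean document; each statement's English description precedes it below -/
import Mathlib

section
/- Let n ≥ 2, ℓ ≥ 1, and let Γ : ({0,1}^ℓ)^n → ℂ be a blockwise symmetric matchgate signature of arity nℓ (i.e., Γ is blockwise symmetric in size ℓ and satisfies the parity condition and the Matchgate Identities) whose matrix form M(Γ) has rank at least 2. Suppose σ, τ ∈ {0,1}^ℓ are such that the rows M(Γ)^σ and M(Γ)^τ are linearly independent, and wt(σ+τ) = min { wt(u+v) : u, v ∈ {0,1}^ℓ and M(Γ)^u, M(Γ)^v are linearly independent }. Then wt(σ+τ) = 1. -/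
open Finset

namespace Matchgate

/-- Bitwise XOR of two bit strings. -/
def bxor {m : ℕ} (a b : Fin m → Bool) : Fin m → Bool := fun i => Bool.xor (a i) (b i)

/-- The bit string `e_p` with a `1` in position `p` and `0` elsewhere. -/
def unit {m : ℕ} (p : Fin m) : Fin m → Bool := fun i => decide (i = p)

/-- Hamming weight of a bit string. -/
def wt {m : ℕ} (a : Fin m → Bool) : ℕ := (Finset.univ.filter fun i => a i = true).card

/-- Total Hamming weight of a blockwise bit string. -/
def wtB {n ℓ : ℕ} (α : Fin n → Fin ℓ → Bool) : ℕ := ∑ j, wt (α j)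

/-- Blockwise XOR. -/
def bxorB {n ℓ : ℕ} (α β : Fin n → Fin ℓ → Bool) : Fin n → Fin ℓ → Bool :=
  fun j => bxor (α j) (β j)

/-- The parity bit `p(a) = wt(a) mod 2` of a bit string, as a `Bool`. -/
def pB {m : ℕ} (a : Fin m → Bool) : Bool := decide (wt a % 2 = 1)

/-- A blockwise signature (blocks of size `ℓ`, `n` blocks) is blockwise symmetric if it is
invariant under every permutation of its blocks. -/
def BlockSym {n ℓ : ℕ} (Γ : (Fin n → Fin ℓ → Bool) → ℂ) : Prop :=
  ∀ (σ : Equiv.Perm (Fin n)) (α : Fin n → Fin ℓ → Bool), Γ (α ∘ σ) = Γ α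

/-- The parity condition for a blockwise signature: either all even entries vanish or all
odd entries vanish. -/
def ParityCond {n ℓ : ℕ} (Γ : (Fin n → Fin ℓ → Bool) → ℂ) : Prop :=
  (∀ α, wtB α % 2 = 0 → Γ α = 0) ∨ (∀ α, wtB α % 2 = 1 → Γ α = 0)

/-- The Matchgate Identities for a blockwise signature.  Positions are pairs `(j, i)`
(block `j`, bit `i` within the block) ordered lexicographically block-major, which is the
order of the flattened bit string `α₁α₂⋯αₙ`.  For every pattern `α` and every position set
`P`, the alternating sum `Σ_{p ∈ P} (-1)^{rank of p in P} Γ(α + e_p) Γ(α + P + e_p)`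
vanishes. -/
def MGI {n ℓ : ℕ} (Γ : (Fin n → Fin ℓ → Bool) → ℂ) : Prop :=
  ∀ (α : Fin n → Fin ℓ → Bool) (P : Finset (Fin n × Fin ℓ)),
    ∑ p ∈ P,
      (-1 : ℂ) ^ (P.filter fun q => q.1 < p.1 ∨ (q.1 = p.1 ∧ q.2 ≤ p.2)).card *
        Γ (fun j i => Bool.xor (α j i) (decide ((j, i) = p))) *
        Γ (fun j i => Bool.xor (α j i)
            (Bool.xor (decide ((j, i) ∈ P)) (decide ((j, i) = p)))) = 0

/-- Prepend an element to a length `n - 1` tuple, giving a length `n` tuple. -/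
def cons0 {n : ℕ} {X : Type*} (a : X) (b : Fin (n - 1) → X) : Fin n → X :=
  fun j => if h : (j : ℕ) = 0 then a else b ⟨(j : ℕ) - 1, by have := j.isLt; omega⟩

/-- The matrix form `M(Γ)` of a blockwise signature: rows indexed by the first block,
columns by the remaining `n - 1` blocks. -/
def matrixForm {n ℓ : ℕ} (Γ : (Fin n → Fin ℓ → Bool) → ℂ) :
    Matrix (Fin ℓ → Bool) (Fin (n - 1) → Fin ℓ → Bool) ℂ :=
  Matrix.of fun a b => Γ (cons0 a b)

/-- XOR block `j` of `α` with `c`, leaving the other blocks unchanged. -/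
def flipBlock {n ℓ : ℕ} (α : Fin n → Fin ℓ → Bool) (j : Fin n) (c : Fin ℓ → Bool) :
    Fin n → Fin ℓ → Bool := Function.update α j (bxor (α j) c)

/-- Insert block `c` at position `t` into a tuple of `n - 1` blocks. -/
def insertAt {n ℓ : ℕ} (t : Fin n) (c : Fin ℓ → Bool) (β : Fin (n - 1) → Fin ℓ → Bool) :
    Fin n → Fin ℓ → Bool :=
  fun j =>
    if h1 : (j : ℕ) = (t : ℕ) then c
    else if h2 : (j : ℕ) < (t : ℕ) then
      β ⟨(j : ℕ), by have := t.isLt; have := j.isLt; omega⟩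
    else β ⟨(j : ℕ) - 1, by have := t.isLt; have := j.isLt; omega⟩

/-- The parity condition for a flat (Boolean-bit) signature. -/
def ParityCond1 {m : ℕ} (Γ : (Fin m → Bool) → ℂ) : Prop :=
  (∀ α, wt α % 2 = 0 → Γ α = 0) ∨ (∀ α, wt α % 2 = 1 → Γ α = 0)

/-- The Matchgate Identities for a flat (Boolean-bit) signature. -/
def MGI1 {m : ℕ} (Γ : (Fin m → Bool) → ℂ) : Prop :=
  ∀ (α : Fin m → Bool) (P : Finset (Fin m)),
    ∑ p ∈ P,
      (-1 : ℂ) ^ (P.filter fun q => q ≤ p).card *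
        Γ (fun k => Bool.xor (α k) (decide (k = p))) *
        Γ (fun k => Bool.xor (α k) (Bool.xor (decide (k ∈ P)) (decide (k = p)))) = 0


/-!
Let `d = wt (σ + τ)` and suppose `d ≥ 2`. Every row `σ + e_p` vanishes: it has the opposite
weight parity to `σ`, so by the parity condition the two rows have disjoint supports, and if it
were nonzero they would be an independent pair at distance `1 < d`.

With the row `σ + e_p` zero, the Matchgate Identity at a pattern whose first block is `σ + e_p`
only sees flips inside the first block. Flipping `p < q` says that all `2 × 2` minors of the
rows `σ` and `σ + e_p + e_q` vanish, so the second is a multiple of the first; when `p, q` lie in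
`supp (σ + τ)` a nonzero multiple would form an independent pair with `τ` at distance `d - 2`,
hence that row vanishes too. Flipping all of `supp (σ + τ)` then leaves the single term
`± M(Γ)^σ(β) · M(Γ)^τ(γ)`, which forces `M(Γ)^τ = 0`.
-/

section Bits

variable {m : ℕ}

def supp (c : Fin m → Bool) : Finset (Fin m) := univ.filter fun i => c i = true

@[simp] lemma mem_supp {c : Fin m → Bool} {i : Fin m} : i ∈ supp c ↔ c i = true := by
  simp [supp]

lemma wt_eq_card_supp (c : Fin m → Bool) : wt c = #(supp c) := rfl

lemma wt_pos_of_ne {a b : Fin m → Bool} (h : a ≠ b) : 0 < wt (bxor a b) := by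
  obtain ⟨i, hi⟩ := Function.ne_iff.mp h
  refine card_pos.mpr ⟨i, mem_supp.mpr ?_⟩
  cases ha : a i <;> cases hb : b i <;> simp_all [bxor]

lemma supp_unit (p : Fin m) : supp (unit p) = {p} := by
  ext; simp [unit]

lemma supp_bxor (a b : Fin m → Bool) :
    supp (bxor a b) = (supp a ∪ supp b) \ (supp a ∩ supp b) := by
  ext i; cases ha : a i <;> cases hb : b i <;> simp [bxor, ha, hb]

lemma wt_bxor_add_two_mul (a b : Fin m → Bool) :
    wt (bxor a b) + 2 * #(supp a ∩ supp b) = wt a + wt b := by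
  rw [wt_eq_card_supp, supp_bxor, card_sdiff_of_subset inter_subset_union]
  have := card_union_add_card_inter (supp a) (supp b)
  have := card_le_card (inter_subset_union (s := supp a) (t := supp b))
  simp only [wt_eq_card_supp]
  omega

lemma supp_bxor_unit_unit {p q : Fin m} (h : p ≠ q) :
    supp (bxor (unit p) (unit q)) = {p, q} := by
  rw [supp_bxor, supp_unit, supp_unit]
  ext; simp [h]

lemma wt_bxor_unit_unit_add_two {c : Fin m → Bool} {p q : Fin m} (h : p ≠ q)
    (hp : p ∈ supp c) (hq : q ∈ supp c) :
    wt (bxor c (bxor (unit p) (unit q))) + 2 = wt c := by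
  have key := wt_bxor_add_two_mul c (bxor (unit p) (unit q))
  have hpq : wt (bxor (unit p) (unit q)) = 2 := by
    rw [wt_eq_card_supp, supp_bxor_unit_unit h, card_pair h]
  rw [supp_bxor_unit_unit h, inter_eq_right.mpr (insert_subset hp (singleton_subset_iff.mpr hq)),
    card_pair h, hpq] at key
  omega

end Bits

section LinearAlgebra

variable {ι K : Type*} [Field K] {x y : ι → K}

lemma linearIndependent_pair_of_disjoint (hx : x ≠ 0) (hy : y ≠ 0)
    (h : ∀ i, x i = 0 ∨ y i = 0) : LinearIndependent K ![x, y] := by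
  rw [LinearIndependent.pair_iff' hx]
  rintro a rfl
  obtain ⟨i, hi⟩ := Function.ne_iff.mp hy
  rcases h i with h | h <;> simp_all

lemma exists_eq_smul_of_mul_eq_mul (hx : x ≠ 0) (h : ∀ i j, x i * y j = y i * x j) :
    ∃ c : K, y = c • x := by
  obtain ⟨i, hi⟩ := Function.ne_iff.mp hx
  refine ⟨y i / x i, funext fun j => ?_⟩
  rw [Pi.smul_apply, smul_eq_mul, div_mul_eq_mul_div, eq_div_iff hi]
  linear_combination h i j

end LinearAlgebra

section Rows

/- For `n = m + 1` the columns of `matrixForm` are indexed by tuples over `Fin (m + 1 - 1)`, which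
is definitionally `Fin m`; we write `Fin m` throughout. -/

variable {m ℓ : ℕ} {X : Type*}

@[simp] lemma cons0_zero (a : X) (b : Fin m → X) : (cons0 a b : Fin (m + 1) → X) 0 = a := by
  simp [cons0]

@[simp] lemma cons0_succ (a : X) (b : Fin m → X) (k : Fin m) :
    (cons0 a b : Fin (m + 1) → X) k.succ = b k := by
  simp [cons0]

lemma cons0_zero_succ (α : Fin (m + 1) → X) :
    cons0 (α 0) (fun k : Fin m => α k.succ) = α := by
  funext j
  cases j using Fin.cases <;> simp

lemma wtB_cons0 (a : Fin ℓ → Bool) (b : Fin m → Fin ℓ → Bool) :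
    wtB (cons0 a b : Fin (m + 1) → Fin ℓ → Bool) = wt a + wtB b := by
  simp [wtB, Fin.sum_univ_succ]

lemma apply_eq_matrixForm (Γ : (Fin (m + 1) → Fin ℓ → Bool) → ℂ)
    (α : Fin (m + 1) → Fin ℓ → Bool) :
    Γ α = matrixForm Γ (α 0) (fun k : Fin m => α k.succ) :=
  congrArg Γ (cons0_zero_succ α).symm

lemma apply_cons0_xor_single_zero (Γ : (Fin (m + 1) → Fin ℓ → Bool) → ℂ)
    (u : Fin ℓ → Bool) (δ : Fin m → Fin ℓ → Bool) (p : Fin ℓ) :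
    (Γ fun j i => cons0 u δ j i ^^ decide ((j, i) = (0, p))) =
      matrixForm Γ (bxor u (unit p)) δ := by
  refine congrArg Γ (funext fun j => ?_)
  cases j using Fin.cases
  · funext i; simp [bxor, unit]
  · simp [Fin.succ_ne_zero]

variable {Γ : (Fin (m + 1) → Fin ℓ → Bool) → ℂ}

lemma ParityCond.matrixForm_eq_zero_or_of_odd (hpar : ParityCond Γ) {u v : Fin ℓ → Bool}
    (huv : (wt u + wt v) % 2 = 1) (β : Fin m → Fin ℓ → Bool) :
    matrixForm Γ u β = 0 ∨ matrixForm Γ v β = 0 := by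
  have hu := wtB_cons0 u β
  have hv := wtB_cons0 v β
  rcases hpar with h | h
  · by_cases hw : (wt u + wtB β) % 2 = 0
    · exact .inl (h _ (by omega))
    · exact .inr (h _ (by omega))
  · by_cases hw : (wt u + wtB β) % 2 = 1
    · exact .inl (h _ (by omega))
    · exact .inr (h _ (by omega))

lemma ParityCond.linearIndependent_rows_of_odd (hpar : ParityCond Γ) {u v : Fin ℓ → Bool}
    (huv : (wt u + wt v) % 2 = 1) (hu : matrixForm Γ u ≠ 0) (hv : matrixForm Γ v ≠ 0) :
    LinearIndependent ℂ ![matrixForm Γ u, matrixForm Γ v] :=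
  linearIndependent_pair_of_disjoint hu hv (hpar.matrixForm_eq_zero_or_of_odd huv)

/- The Matchgate Identity at `cons0 a β`, with `P` the positions where it differs from
`cons0 (a + c) γ`. A position of `P` outside the first block contributes nothing: flipping it keeps
the first block equal to `a`, whose row vanishes. -/
theorem MGI.sum_supp_eq_zero (hmgi : MGI Γ) {a : Fin ℓ → Bool} (ha : matrixForm Γ a = 0)
    (c : Fin ℓ → Bool) (β γ : Fin m → Fin ℓ → Bool) :
    ∑ p ∈ supp c, (-1 : ℂ) ^ #{q ∈ supp c | q ≤ p} *
      matrixForm Γ (bxor a (unit p)) β * matrixForm Γ (bxor (bxor a c) (unit p)) γ = 0 := by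
  set α : Fin (m + 1) → Fin ℓ → Bool := cons0 a β
  set α' : Fin (m + 1) → Fin ℓ → Bool := cons0 (bxor a c) γ
  set P := univ.filter fun r : Fin (m + 1) × Fin ℓ => α r.1 r.2 ≠ α' r.1 r.2
  have hαP : ∀ j i, (α j i ^^ decide ((j, i) ∈ P)) = α' j i := by
    intro j i
    simp only [P, mem_filter, mem_univ, true_and]
    generalize α j i = x, α' j i = y
    cases x <;> cases y <;> rfl
  have hP0 : P.filter (·.1 = 0) = (supp c).map (.sectR 0 _) := by
    ext ⟨j, i⟩
    cases j using Fin.cases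
    · simp only [P, α, α', mem_filter, mem_univ, true_and, cons0_zero, bxor, mem_map, mem_supp,
        Function.Embedding.sectR_apply, Prod.mk.injEq, and_true, exists_eq_right]
      cases a i <;> cases c i <;> simp
    · simp [(Fin.succ_ne_zero _).symm]
  have h := hmgi α P
  simp only [← Bool.xor_assoc, hαP] at h
  rw [← sum_filter_add_sum_filter_not P (·.1 = 0), sum_eq_zero (s := P.filter (¬·.1 = 0))
    (fun r hr => ?off), add_zero, hP0, sum_map] at h
  case off =>
    obtain ⟨j, i⟩ := r
    have hj : j ≠ 0 := (mem_filter.mp hr).2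
    rw [apply_eq_matrixForm Γ (fun j i => _)]
    simp [α, Ne.symm hj, ha]
  rw [← h]
  refine sum_congr rfl fun p _ => ?_
  have hsign : #{x ∈ P | x.1 = 0 ∧ x.2 ≤ p} = #{q ∈ supp c | q ≤ p} := by
    rw [← filter_filter, hP0, filter_map, card_map]
    rfl
  simp only [Function.Embedding.sectR_apply, Fin.not_lt_zero, false_or, hsign]
  rw [apply_cons0_xor_single_zero Γ a β, apply_cons0_xor_single_zero Γ (bxor a c) γ]

lemma MGI.matrixForm_mul_eq_mul_of_bxor_unit_eq_zero (hmgi : MGI Γ) {σ : Fin ℓ → Bool}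
    {p q : Fin ℓ} (hσp : matrixForm Γ (bxor σ (unit p)) = 0) (hpq : p < q)
    (β γ : Fin m → Fin ℓ → Bool) :
    matrixForm Γ σ β * matrixForm Γ (bxor σ (bxor (unit p) (unit q))) γ =
      matrixForm Γ (bxor σ (bxor (unit p) (unit q))) β * matrixForm Γ σ γ := by
  have h := hmgi.sum_supp_eq_zero hσp (bxor (unit p) (unit q)) β γ
  have e1 : bxor (bxor σ (unit p)) (unit p) = σ := by
    funext i; simp [bxor, Bool.xor_left_comm, Bool.xor_comm]
  have e2 : bxor (bxor σ (unit p)) (unit q) = bxor σ (bxor (unit p) (unit q)) := by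
    funext i; simp [bxor]
  have e3 : bxor (bxor (bxor σ (unit p)) (bxor (unit p) (unit q))) (unit p) =
      bxor σ (bxor (unit p) (unit q)) := by
    funext i; simp [bxor, Bool.xor_left_comm, Bool.xor_comm]
  have e4 : bxor (bxor (bxor σ (unit p)) (bxor (unit p) (unit q))) (unit q) = σ := by
    funext i; simp [bxor, Bool.xor_left_comm, Bool.xor_comm]
  rw [supp_bxor_unit_unit hpq.ne, sum_pair hpq.ne, e1, e2, e3, e4] at h
  simp [filter_insert, filter_singleton, hpq.le, hpq.not_ge, hpq.ne] at h
  linear_combination -h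

end Rows

section MinimalPair

variable {m ℓ : ℕ} {Γ : (Fin (m + 1) → Fin ℓ → Bool) → ℂ} {σ τ : Fin ℓ → Bool}

lemma matrixForm_bxor_unit_eq_zero (hpar : ParityCond Γ) (hσ : matrixForm Γ σ ≠ 0)
    (hmin : ∀ u v : Fin ℓ → Bool,
      LinearIndependent ℂ ![matrixForm Γ u, matrixForm Γ v] →
      wt (bxor σ τ) ≤ wt (bxor u v))
    (hd : 2 ≤ wt (bxor σ τ)) (p : Fin ℓ) : matrixForm Γ (bxor σ (unit p)) = 0 := by
  by_contra hp
  have hwt : wt (bxor σ (bxor σ (unit p))) = 1 := by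
    rw [show bxor σ (bxor σ (unit p)) = unit p by funext i; simp [bxor], wt_eq_card_supp,
      supp_unit, card_singleton]
  have hodd : (wt σ + wt (bxor σ (unit p))) % 2 = 1 := by
    have := wt_bxor_add_two_mul σ (bxor σ (unit p))
    omega
  have := hmin _ _ (hpar.linearIndependent_rows_of_odd hodd hσ hp)
  omega

lemma matrixForm_bxor_unit_unit_eq_zero (hpar : ParityCond Γ) (hmgi : MGI Γ)
    (hind : LinearIndependent ℂ ![matrixForm Γ σ, matrixForm Γ τ])
    (hmin : ∀ u v : Fin ℓ → Bool,
      LinearIndependent ℂ ![matrixForm Γ u, matrixForm Γ v] →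
      wt (bxor σ τ) ≤ wt (bxor u v))
    (hd : 2 ≤ wt (bxor σ τ)) {p q : Fin ℓ} (hpq : p ≠ q) (hp : p ∈ supp (bxor σ τ))
    (hq : q ∈ supp (bxor σ τ)) : matrixForm Γ (bxor σ (bxor (unit p) (unit q))) = 0 := by
  wlog hlt : p < q generalizing p q
  · rw [show bxor (unit p) (unit q) = bxor (unit q) (unit p) by
      funext i; simp [bxor, Bool.xor_comm]]
    exact this hpq.symm hq hp (lt_of_le_of_ne (not_lt.mp hlt) hpq.symm)
  have hσ : matrixForm Γ σ ≠ 0 := by simpa using hind.ne_zero 0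
  obtain ⟨c, hc⟩ := exists_eq_smul_of_mul_eq_mul hσ
    (hmgi.matrixForm_mul_eq_mul_of_bxor_unit_eq_zero
      (matrixForm_bxor_unit_eq_zero hpar hσ hmin hd p) hlt)
  rcases eq_or_ne c 0 with rfl | hc0
  · simpa using hc
  have hli : LinearIndependent ℂ
      ![matrixForm Γ (bxor σ (bxor (unit p) (unit q))), matrixForm Γ τ] := by
    simpa [hc] using (LinearIndependent.pair_smul_smul_iff (isUnit_iff_ne_zero.mpr hc0)
      isUnit_one).mpr hind
  have hle := hmin _ _ hli
  rw [show bxor (bxor σ (bxor (unit p) (unit q))) τ =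
      bxor (bxor σ τ) (bxor (unit p) (unit q)) by
    funext i; simp [bxor, Bool.xor_left_comm, Bool.xor_comm]] at hle
  have := wt_bxor_unit_unit_add_two hpq hp hq
  omega

lemma wt_bxor_lt_two (hpar : ParityCond Γ) (hmgi : MGI Γ)
    (hind : LinearIndependent ℂ ![matrixForm Γ σ, matrixForm Γ τ])
    (hmin : ∀ u v : Fin ℓ → Bool,
      LinearIndependent ℂ ![matrixForm Γ u, matrixForm Γ v] →
      wt (bxor σ τ) ≤ wt (bxor u v)) :
    wt (bxor σ τ) < 2 := by
  by_contra! hd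
  have hσ : matrixForm Γ σ ≠ 0 := by simpa using hind.ne_zero 0
  have hτ : matrixForm Γ τ ≠ 0 := by simpa using hind.ne_zero 1
  obtain ⟨p₀, hp₀⟩ : (supp (bxor σ τ)).Nonempty :=
    card_pos.mp (by rw [← wt_eq_card_supp]; omega)
  obtain ⟨β, hβ⟩ : ∃ β, matrixForm Γ σ β ≠ 0 := Function.ne_iff.mp hσ
  refine hτ (funext fun γ => ?_)
  have h := hmgi.sum_supp_eq_zero (matrixForm_bxor_unit_eq_zero hpar hσ hmin hd p₀)
    (bxor σ τ) β γ
  rw [sum_eq_single p₀ (fun p hp hne => ?_) (absurd hp₀)] at h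
  · rw [show bxor (bxor σ (unit p₀)) (unit p₀) = σ by
        funext i; simp [bxor, Bool.xor_left_comm, Bool.xor_comm],
      show bxor (bxor (bxor σ (unit p₀)) (bxor σ τ)) (unit p₀) = τ by
        funext i; simp [bxor, Bool.xor_left_comm, Bool.xor_comm]] at h
    simpa [hβ] using h
  · rw [show bxor (bxor σ (unit p₀)) (unit p) = bxor σ (bxor (unit p₀) (unit p)) by
        funext i; simp [bxor],
      matrixForm_bxor_unit_unit_eq_zero hpar hmgi hind hmin hd (Ne.symm hne) hp₀ hp]
    simp

end MinimalPair

theorem stmt2_general (n ℓ : ℕ) (hn : 2 ≤ n)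
    (Γ : (Fin n → Fin ℓ → Bool) → ℂ)
    (hpar : ParityCond Γ) (hmgi : MGI Γ)
    (σ τ : Fin ℓ → Bool)
    (hind : LinearIndependent ℂ ![matrixForm Γ σ, matrixForm Γ τ])
    (hmin : ∀ u v : Fin ℓ → Bool,
      LinearIndependent ℂ ![matrixForm Γ u, matrixForm Γ v] →
      wt (bxor σ τ) ≤ wt (bxor u v)) :
    wt (bxor σ τ) = 1 := by
  obtain ⟨m, rfl⟩ : ∃ m, n = m + 1 := ⟨n - 1, by omega⟩
  have hστ : σ ≠ τ := by
    rintro rfl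
    exact absurd (hind.injective (a₁ := 0) (a₂ := 1) rfl) (by decide)
  have hpos := wt_pos_of_ne hστ
  have hlt := wt_bxor_lt_two hpar hmgi hind hmin
  omega

/-- for a blockwise symmetric matchgate signature with `rank M(Γ) ≥ 2`,
a weight-minimal pair of linearly independent rows differs in exactly one bit. -/
theorem stmt2 (n ℓ : ℕ) (hn : 2 ≤ n) (hℓ : 1 ≤ ℓ)
    (Γ : (Fin n → Fin ℓ → Bool) → ℂ)
    (hsym : BlockSym Γ) (hpar : ParityCond Γ) (hmgi : MGI Γ)
    (hrank : 2 ≤ (matrixForm Γ).rank)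
    (σ τ : Fin ℓ → Bool)
    (hind : LinearIndependent ℂ ![matrixForm Γ σ, matrixForm Γ τ])
    (hmin : ∀ u v : Fin ℓ → Bool,
      LinearIndependent ℂ ![matrixForm Γ u, matrixForm Γ v] →
      wt (bxor σ τ) ≤ wt (bxor u v)) :
    wt (bxor σ τ) = 1 :=
  stmt2_general n ℓ hn Γ hpar hmgi σ τ hind hmin

end Matchgate
end

section
/- Let n ≥ 2, ℓ ≥ 1, and let Γ : ({0,1}^ℓ)^n → ℂ be a blockwise symmetric matchgate signature of arity nℓ whose matrix form M(Γ) has rank at least 2. Suppose σ, τ ∈ {0,1}^ℓ are such that the rows M(Γ)^σ and M(Γ)^τ are linearly independent and wt(σ+τ) is minimal among all pairs of row indices whose rows are linearly independent. Fix t ∈ {1,…,n}, and for β = (β_1,…,β_{n−1}) ∈ ({0,1}^ℓ)^{n−1} set x_β = (Γ(β_1,…,β_{t−1},σ,β_t,…,β_{n−1}), Γ(β_1,…,β_{t−1},τ,β_t,…,β_{n−1})) ∈ ℂ². If ζ, η ∈ ({0,1}^ℓ)^{n−1} are such that x_ζ and x_η are linearly independent and wt(ζ+η) = min { wt(u+v)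 : x_u and x_v are linearly independent }, then wt(ζ+η) = 1. -/
/-!
Write `cβ` for the pattern with block `c` inserted at position `t` into `β`, so that by block
symmetry `M(Γ)^c = (β ↦ Γ(cβ))` and `x_β = (Γ(σβ), Γ(τβ))`. Let `s = wt(σ + τ)` and
`d = wt(ζ + η) ≥ 1`. By minimality, a row `c` strictly closer than `s` to both `σ` and `τ` depends
on both independent rows `M(Γ)^σ, M(Γ)^τ`, hence vanishes; likewise `x_u = 0` for every `u`
strictly closer than `d` to both `ζ` and `η`.

Suppose `d ≥ 2`; we show `Γ(σζ)Γ(τη) = Γ(τζ)Γ(ση)`, i.e. `x_ζ, x_η` are dependent. Take `i`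
with `σ_i ≠ τ_i` and apply the MGI at `σζ + e_(t,i)` with `P` the positions where `σζ` and `τη`
differ; the term `p = (t,i)` is `Γ(σζ)Γ(τη)`, and every other term vanishes. Indeed, if `s = 1`
its first factor is the `τ`-entry of `x_u` for `u = ζ + e_p`, at distances `1` and `d - 1` from
`ζ, η`; if `s ≥ 3`, block `t` of its first factor is `σ + e_i (+ e_j)`, at distance `≤ 2` from
`σ` and `< s` from `τ`. So `Γ(σζ)Γ(τη) = 0`, and symmetrically `Γ(τζ)Γ(ση) = 0`. If `s = 2`,
with `σ, τ` differing at `u < v`, only the terms at `(t,u)` and `(t,v)` survive; they are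
adjacent in `P`, hence of opposite sign, and they are `Γ(σζ)Γ(τη)` and `Γ(τζ)Γ(ση)`.
-/

open Finset

namespace Matchgate

open Function

section HammingDist
variable {ι : Type*} [Fintype ι]

lemma eq_of_hammingDist_eq_one {x y : ι → Bool} (h : hammingDist x y = 1) {i k : ι}
    (hi : x i ≠ y i) (hk : x k ≠ y k) : k = i :=
  Finset.card_le_one.1 h.le k (by simpa using hk) i (by simpa using hi)

lemma exists_lt_of_hammingDist_eq_two [LinearOrder ι] {x y : ι → Bool}
    (h : hammingDist x y = 2) : ∃ u v, u < v ∧ ∀ i, x i ≠ y i ↔ i = u ∨ i = v := by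
  obtain ⟨a, b, hab, hD⟩ := Finset.card_eq_two.1 h
  have hmem : ∀ i, x i ≠ y i ↔ i = a ∨ i = b := fun i => by simpa using Finset.ext_iff.1 hD i
  rcases hab.lt_or_gt with hlt | hlt
  · exact ⟨a, b, hlt, hmem⟩
  · exact ⟨b, a, hlt, fun i => (hmem i).trans or_comm⟩

end HammingDist

section FlipBit
variable {ι : Type*} [DecidableEq ι]

def flipBit (x : ι → Bool) (i : ι) : ι → Bool := fun k => xor (x k) (decide (k = i))

@[simp] lemma flipBit_apply_self (x : ι → Bool) (i : ι) : flipBit x i i = !x i := by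
  simp [flipBit]

@[simp] lemma flipBit_apply_of_ne (x : ι → Bool) {i k : ι} (h : k ≠ i) :
    flipBit x i k = x k := by
  simp [flipBit, h]

variable [Fintype ι]

lemma hammingDist_flipBit_self (x : ι → Bool) (i : ι) : hammingDist (flipBit x i) x = 1 := by
  rw [hammingDist, Finset.card_eq_one]
  refine ⟨i, Finset.eq_singleton_iff_unique_mem.2 ⟨by simp, fun k hk => ?_⟩⟩
  by_contra h
  simp [h] at hk

lemma hammingDist_flipBit_add_one {x y : ι → Bool} {i : ι} (h : x i ≠ y i) :
    hammingDist (flipBit x i) y + 1 = hammingDist x y := by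
  have : univ.filter (fun k => flipBit x i k ≠ y k) = (univ.filter fun k => x k ≠ y k).erase i := by
    ext k
    by_cases hk : k = i
    · subst hk; simp_all
    · simp [hk]
  rw [hammingDist, hammingDist, this, Finset.card_erase_add_one (by simpa using h)]

lemma flipBit_eq_of_hammingDist_eq_one {x y : ι → Bool} {i : ι} (hi : x i ≠ y i)
    (h : hammingDist x y = 1) : flipBit x i = y := by
  have := hammingDist_flipBit_add_one hi
  exact hammingDist_eq_zero.1 (by omega)

lemma flipBit_flipBit_eq_of_hammingDist_eq_two {x y : ι → Bool} {u v : ι} (huv : u ≠ v)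
    (hu : x u ≠ y u) (hv : x v ≠ y v) (h : hammingDist x y = 2) :
    flipBit (flipBit x u) v = y := by
  have h1 := hammingDist_flipBit_add_one hu
  have h2 := hammingDist_flipBit_add_one (x := flipBit x u)
    (by rwa [flipBit_apply_of_ne _ huv.symm])
  exact hammingDist_eq_zero.1 (by omega)

end FlipBit

@[simp] lemma bxor_unit {m : ℕ} (c : Fin m → Bool) (i : Fin m) : bxor c (unit i) = flipBit c i :=
  rfl

lemma wt_bxor_eq_hammingDist {m : ℕ} (a b : Fin m → Bool) : wt (bxor a b) = hammingDist a b := by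
  simp [wt, bxor, hammingDist]

lemma wtB_bxorB_eq_hammingDist {n ℓ : ℕ} (u v : Fin n → Fin ℓ → Bool) :
    wtB (bxorB u v) = hammingDist (uncurry u) (uncurry v) := by
  simp only [wtB, bxorB, wt_bxor_eq_hammingDist, hammingDist, Finset.card_filter,
    Fintype.sum_prod_type, uncurry_apply_pair]
  congr!

lemma card_filter_le_eq_add_one_of_gap {ι α : Type*} [DecidableEq ι] [LinearOrder α]
    {f : ι → α} (hf : Injective f) {s : Finset ι} {q r : ι} (hr : r ∈ s) (hqr : f q < f r)
    (hgap : ∀ p ∈ s, f q < f p → f r ≤ f p) :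
    #{p ∈ s | f p ≤ f r} = #{p ∈ s | f p ≤ f q} + 1 := by
  rw [← Finset.card_insert_of_notMem (a := r) (by simp [hqr.not_ge])]
  congr 1
  ext p
  simp only [Finset.mem_filter, Finset.mem_insert]
  constructor
  · rintro ⟨hp, hpr⟩
    rcases eq_or_ne p r with rfl | hpr'
    · exact Or.inl rfl
    · exact Or.inr ⟨hp, not_lt.1 fun hqp => (hpr.lt_of_ne (hf.ne hpr')).not_ge (hgap p hp hqp)⟩
  · rintro (rfl | ⟨hp, hpq⟩)
    · exact ⟨hr, le_rfl⟩
    · exact ⟨hp, hpq.trans hqr.le⟩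

lemma linearIndependent_pair_fin_two_iff {K : Type*} [Field K] (a b c d : K) :
    LinearIndependent K ![![a, b], ![c, d]] ↔ a * d - b * c ≠ 0 := by
  rw [← Matrix.det_fin_two_of, ← isUnit_iff_ne_zero, ← Matrix.isUnit_iff_isUnit_det,
    ← Matrix.linearIndependent_rows_iff_isUnit]
  rfl

def IsMinIndepPair (K : Type*) {κ V : Type*} [Field K] [AddCommGroup V] [Module K V]
    (f : κ → V) (d : κ → κ → ℕ) (a b : κ) : Prop :=
  LinearIndependent K ![f a, f b] ∧ ∀ u v, LinearIndependent K ![f u, f v] → d a b ≤ d u v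

namespace IsMinIndepPair
variable {K κ V : Type*} [Field K] [AddCommGroup V] [Module K V] {f : κ → V} {d : κ → κ → ℕ}
  {a b : κ}

lemma symm (h : IsMinIndepPair K f d a b) (hd : ∀ u v, d u v = d v u) :
    IsMinIndepPair K f d b a :=
  ⟨LinearIndependent.pair_symm_iff.1 h.1, fun u v huv => hd b a ▸ h.2 u v huv⟩

lemma ne (h : IsMinIndepPair K f d a b) : a ≠ b := by
  rintro rfl
  exact LinearIndependent.pair_iff.1 h.1 1 (-1) (by simp) |>.1 |> one_ne_zero

/-- `f c` is dependent on each of the independent vectors `f a`, `f b`, hence zero. -/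
lemma eq_zero (h : IsMinIndepPair K f d a b) {c : κ} (hca : d c a < d a b)
    (hcb : d c b < d a b) : f c = 0 := by
  by_contra hc
  have hdep : ∀ e, d c e < d a b → ∃ r : K, r • f c = f e := fun e he => by
    by_contra! hne
    exact (h.2 c e ((LinearIndependent.pair_iff' hc).2 hne)).not_gt he
  obtain ⟨r, hr⟩ := hdep a hca
  obtain ⟨r', hr'⟩ := hdep b hcb
  have := LinearIndependent.pair_iff.1 h.1 r' (-r) (by
    rw [← hr, ← hr', smul_smul, smul_smul, neg_mul, mul_comm, neg_smul, add_neg_cancel])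
  exact h.1.ne_zero 0 (by simp [← hr, neg_eq_zero.1 this.2])

end IsMinIndepPair

local notation:65 α:65 " +ₑ " p:66 => flipBlock α (Prod.fst p) (unit (Prod.snd p))

section Patterns
variable {n ℓ : ℕ}

def diffSet (α β : Fin n → Fin ℓ → Bool) : Finset (Fin n × Fin ℓ) :=
  univ.filter fun p => α p.1 p.2 ≠ β p.1 p.2

@[simp] lemma mem_diffSet {α β : Fin n → Fin ℓ → Bool} {p : Fin n × Fin ℓ} :
    p ∈ diffSet α β ↔ α p.1 p.2 ≠ β p.1 p.2 := by
  simp [diffSet]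

@[simp] lemma flipBlock_apply_self (α : Fin n → Fin ℓ → Bool) (j : Fin n) (c : Fin ℓ → Bool) :
    flipBlock α j c j = bxor (α j) c := by
  simp [flipBlock]

@[simp] lemma flipBlock_apply_of_ne (α : Fin n → Fin ℓ → Bool) {j k : Fin n} (c : Fin ℓ → Bool)
    (h : k ≠ j) : flipBlock α j c k = α k := by
  simp [flipBlock, h]

@[simp] lemma flipBlock_flipBlock_self (α : Fin n → Fin ℓ → Bool) (j : Fin n)
    (c : Fin ℓ → Bool) : flipBlock (flipBlock α j c) j c = α := by
  funext k i
  by_cases hk : k = j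
  · subst hk; simp [bxor]
  · simp [hk]

@[simp] lemma diffSet_flipBlock (α β : Fin n → Fin ℓ → Bool) (j : Fin n) (c : Fin ℓ → Bool) :
    diffSet (flipBlock α j c) (flipBlock β j c) = diffSet α β := by
  ext ⟨k, i⟩
  by_cases hk : k = j
  · subst hk; simp [bxor]
  · simp [hk]

lemma flipBlock_unit_eq (α : Fin n → Fin ℓ → Bool) (p : Fin n × Fin ℓ) :
    α +ₑ p = fun j i => xor (α j i) (decide ((j, i) = p)) := by
  funext j i
  by_cases hj : j = p.1
  · subst hj; simp [flipBit, Prod.ext_iff]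
  · simp [hj, Prod.ext_iff]

lemma uncurry_flipBlock_unit (α : Fin n → Fin ℓ → Bool) (j : Fin n) (i : Fin ℓ) :
    uncurry (flipBlock α j (unit i)) = flipBit (uncurry α) (j, i) := by
  rw [show flipBlock α j (unit i) = α +ₑ (j, i) from rfl, flipBlock_unit_eq]
  rfl

variable {Γ : (Fin n → Fin ℓ → Bool) → ℂ}

/-- The MGI at `α` with `P = α + β`, so that `α + P + e_p = β + e_p`. -/
lemma MGI.sum_diffSet (hmgi : MGI Γ) (α β : Fin n → Fin ℓ → Bool) :
    ∑ p ∈ diffSet α β, (-1 : ℂ) ^ #{q ∈ diffSet α β | toLex q ≤ toLex p} *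
      Γ (α +ₑ p) * Γ (β +ₑ p) = 0 := by
  have hβ : ∀ j i, β j i = xor (α j i) (decide ((j, i) ∈ diffSet α β)) := fun j i => by
    cases hα : α j i <;> cases hβ : β j i <;> simp [hα, hβ]
  refine Eq.trans (Finset.sum_congr rfl fun p _ => ?_) (hmgi α (diffSet α β))
  simp_rw [Prod.Lex.toLex_le_toLex, flipBlock_unit_eq, ← Bool.xor_assoc, ← hβ]

lemma MGI.mul_eq_zero_of_terms_eq_zero (hmgi : MGI Γ) {α β : Fin n → Fin ℓ → Bool}
    {q : Fin n × Fin ℓ} (hq : q ∈ diffSet α β)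
    (h : ∀ p ∈ diffSet α β, p ≠ q → Γ (α +ₑ q +ₑ p) = 0) : Γ α * Γ β = 0 := by
  have hsum := hmgi.sum_diffSet (α +ₑ q) (β +ₑ q)
  rw [diffSet_flipBlock, Finset.sum_eq_single_of_mem q hq fun p hp hpq => by
    rw [h p hp hpq, mul_zero, zero_mul], flipBlock_flipBlock_self, flipBlock_flipBlock_self,
    mul_assoc] at hsum
  exact (mul_eq_zero.1 hsum).resolve_left (pow_ne_zero _ (by norm_num))

lemma MGI.mul_eq_mul_of_terms_eq_zero (hmgi : MGI Γ) {α β : Fin n → Fin ℓ → Bool}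
    {q r : Fin n × Fin ℓ} (hq : q ∈ diffSet α β) (hr : r ∈ diffSet α β)
    (hqr : toLex q < toLex r) (hgap : ∀ p ∈ diffSet α β, toLex q < toLex p → toLex r ≤ toLex p)
    (h : ∀ p ∈ diffSet α β, p ≠ q → p ≠ r → Γ (α +ₑ q +ₑ p) = 0) :
    Γ α * Γ β = Γ (α +ₑ q +ₑ r) * Γ (β +ₑ q +ₑ r) := by
  have hsum := hmgi.sum_diffSet (α +ₑ q) (β +ₑ q)
  rw [diffSet_flipBlock, ← Finset.sum_subset (s₁ := {q, r})
      (by simp [Finset.insert_subset_iff, hq, hr]) fun p hp hpqr => by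
        simp only [Finset.mem_insert, Finset.mem_singleton, not_or] at hpqr
        rw [h p hp hpqr.1 hpqr.2, mul_zero, zero_mul],
    Finset.sum_pair fun e => hqr.ne (congrArg toLex e), flipBlock_flipBlock_self,
    flipBlock_flipBlock_self] at hsum
  -- `r` is the successor of `q` in `α + β`, so the two surviving terms have opposite signs.
  rw [card_filter_le_eq_add_one_of_gap toLex.injective hr hqr hgap, pow_succ] at hsum
  have : (-1 : ℂ) ^ #{p ∈ diffSet α β | toLex p ≤ toLex q} *
      (Γ α * Γ β - Γ (α +ₑ q +ₑ r) * Γ (β +ₑ q +ₑ r)) = 0 := by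
    linear_combination hsum
  exact sub_eq_zero.1 ((mul_eq_zero.1 this).resolve_left (pow_ne_zero _ (by norm_num)))

end Patterns

section InsertNth
variable {m ℓ : ℕ}

lemma insertAt_eq_insertNth (t : Fin (m + 1)) (c : Fin ℓ → Bool) (β : Fin m → Fin ℓ → Bool) :
    insertAt t c β = t.insertNth c β := by
  funext j
  rcases t.eq_self_or_eq_succAbove j with rfl | ⟨k, rfl⟩
  · simp [insertAt]
  · rw [Fin.insertNth_apply_succAbove]
    rcases t.castSucc_lt_or_lt_succ k with h | h
    · rw [Fin.succAbove_of_castSucc_lt _ _ h]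
      rw [Fin.lt_def, Fin.val_castSucc] at h
      simp [insertAt, h, h.ne]
    · rw [Fin.succAbove_of_lt_succ _ _ h]
      rw [Fin.lt_def, Fin.val_succ] at h
      simp only [insertAt, Fin.val_succ]
      rw [dif_neg (by omega), dif_neg (by omega)]
      rfl

lemma cons0_eq_cons {X : Type*} (a : X) (b : Fin m → X) :
    (cons0 a b : Fin (m + 1) → X) = Fin.cons a b := by
  funext j
  cases j using Fin.cases <;> simp [cons0]

lemma matrixForm_apply_eq_insertNth {Γ : (Fin (m + 1) → Fin ℓ → Bool) → ℂ} (hsym : BlockSym Γ)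
    (t : Fin (m + 1)) (c : Fin ℓ → Bool) (β : Fin m → Fin ℓ → Bool) :
    matrixForm Γ c β = Γ (t.insertNth c β) := by
  rw [← hsym t.cycleRange.symm, Fin.insertNth_comp_cycleRange_symm]
  simp [matrixForm, cons0_eq_cons]

@[simp] lemma insertNth_flipBlock_self (t : Fin (m + 1)) (c : Fin ℓ → Bool)
    (β : Fin m → Fin ℓ → Bool) (i : Fin ℓ) :
    flipBlock (t.insertNth c β) t (unit i) = t.insertNth (flipBit c i) β := by
  simp [flipBlock]

lemma insertNth_flipBlock_succAbove (t : Fin (m + 1)) (c : Fin ℓ → Bool)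
    (β : Fin m → Fin ℓ → Bool) (j : Fin m) (i : Fin ℓ) :
    flipBlock (t.insertNth c β) (t.succAbove j) (unit i) =
      t.insertNth c (flipBlock β j (unit i)) := by
  simp [flipBlock, Fin.insertNth_update]

end InsertNth

section Core
variable {m ℓ : ℕ} {Γ : (Fin (m + 1) → Fin ℓ → Bool) → ℂ} {σ τ : Fin ℓ → Bool}

lemma apply_eq_zero_of_hammingDist_lt (hsym : BlockSym Γ)
    (hrows : IsMinIndepPair ℂ (matrixForm Γ) hammingDist σ τ) (t : Fin (m + 1))
    {α : Fin (m + 1) → Fin ℓ → Bool} (hσ : hammingDist (α t) σ < hammingDist σ τ)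
    (hτ : hammingDist (α t) τ < hammingDist σ τ) : Γ α = 0 := by
  rw [← Fin.insertNth_self_removeNth t α, ← matrixForm_apply_eq_insertNth hsym,
    hrows.eq_zero hσ hτ, Pi.zero_apply]

lemma mul_eq_zero_of_three_le_hammingDist (hsym : BlockSym Γ) (hmgi : MGI Γ)
    (hrows : IsMinIndepPair ℂ (matrixForm Γ) hammingDist σ τ) (hs : 3 ≤ hammingDist σ τ)
    (t : Fin (m + 1)) (β β' : Fin m → Fin ℓ → Bool) :
    Γ (t.insertNth σ β) * Γ (t.insertNth τ β') = 0 := by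
  obtain ⟨i, hi⟩ := ne_iff.1 hrows.ne
  have hστ := hammingDist_flipBit_add_one hi
  have hσ := hammingDist_flipBit_self σ i
  refine hmgi.mul_eq_zero_of_terms_eq_zero (q := (t, i)) (by simpa using hi) ?_
  rintro ⟨j, k⟩ hp hne
  rw [insertNth_flipBlock_self]
  obtain rfl | hj := eq_or_ne j t
  · have hk : σ k ≠ τ k := by simpa using hp
    have hki : k ≠ i := fun h => hne (by rw [h])
    have h1 := hammingDist_flipBit_self (flipBit σ i) k
    have h2 := hammingDist_flipBit_add_one (x := flipBit σ i) (y := τ) (i := k)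
      (by rwa [flipBit_apply_of_ne _ hki])
    have h3 := hammingDist_triangle (flipBit (flipBit σ i) k) (flipBit σ i) σ
    apply apply_eq_zero_of_hammingDist_lt hsym hrows j <;>
      simp only [flipBlock_apply_self, Fin.insertNth_apply_same, bxor_unit] <;> omega
  · apply apply_eq_zero_of_hammingDist_lt hsym hrows t <;>
      simp only [flipBlock_apply_of_ne _ _ hj.symm, Fin.insertNth_apply_same] <;> omega

lemma mul_eq_mul_of_hammingDist_eq_two (hsym : BlockSym Γ) (hmgi : MGI Γ)
    (hrows : IsMinIndepPair ℂ (matrixForm Γ) hammingDist σ τ) (hs : hammingDist σ τ = 2)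
    (t : Fin (m + 1)) (β β' : Fin m → Fin ℓ → Bool) :
    Γ (t.insertNth σ β) * Γ (t.insertNth τ β') = Γ (t.insertNth τ β) * Γ (t.insertNth σ β') := by
  obtain ⟨u, v, huv, hdiff⟩ := exists_lt_of_hammingDist_eq_two hs
  have hu : σ u ≠ τ u := (hdiff u).2 (Or.inl rfl)
  have hv : σ v ≠ τ v := (hdiff v).2 (Or.inr rfl)
  have hσu := hammingDist_flipBit_add_one hu
  have hσu' := hammingDist_flipBit_self σ u
  have hmem : ∀ k, (t, k) ∈ diffSet (t.insertNth σ β) (t.insertNth τ β') ↔ k = u ∨ k = v := by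
    simpa using hdiff
  have key := hmgi.mul_eq_mul_of_terms_eq_zero (q := (t, u)) (r := (t, v))
    ((hmem u).2 (Or.inl rfl)) ((hmem v).2 (Or.inr rfl))
    (Prod.Lex.toLex_lt_toLex.2 (Or.inr ⟨rfl, huv⟩)) ?gap ?terms
  case gap =>
    rintro ⟨j, k⟩ hp hlt
    rw [Prod.Lex.toLex_lt_toLex] at hlt
    rw [Prod.Lex.toLex_le_toLex]
    rcases hlt with hlt | ⟨rfl, hlt⟩
    · exact Or.inl hlt
    · rcases (hmem k).1 hp with rfl | rfl
      · exact absurd hlt (lt_irrefl _)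
      · exact Or.inr ⟨rfl, le_rfl⟩
  case terms =>
    rintro ⟨j, k⟩ hp hpu hpv
    obtain rfl | hj := eq_or_ne j t
    · rcases (hmem k).1 hp with rfl | rfl <;> simp at hpu hpv
    · rw [insertNth_flipBlock_self]
      apply apply_eq_zero_of_hammingDist_lt hsym hrows t <;>
        simp only [flipBlock_apply_of_ne _ _ hj.symm, Fin.insertNth_apply_same] <;> omega
  rwa [insertNth_flipBlock_self, insertNth_flipBlock_self, insertNth_flipBlock_self,
    insertNth_flipBlock_self, flipBit_flipBit_eq_of_hammingDist_eq_two huv.ne hu hv hs,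
    flipBit_flipBit_eq_of_hammingDist_eq_two huv.ne hu.symm hv.symm
      (by rwa [hammingDist_comm])] at key

lemma mul_eq_mul_of_two_le_hammingDist (hsym : BlockSym Γ) (hmgi : MGI Γ)
    (hrows : IsMinIndepPair ℂ (matrixForm Γ) hammingDist σ τ) (hs : 2 ≤ hammingDist σ τ)
    (t : Fin (m + 1)) (β β' : Fin m → Fin ℓ → Bool) :
    Γ (t.insertNth σ β) * Γ (t.insertNth τ β') = Γ (t.insertNth τ β) * Γ (t.insertNth σ β') := by
  obtain hs | hs := hs.eq_or_lt
  · exact mul_eq_mul_of_hammingDist_eq_two hsym hmgi hrows hs.symm t β β'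
  · rw [mul_eq_zero_of_three_le_hammingDist hsym hmgi hrows hs t β β',
      mul_eq_zero_of_three_le_hammingDist hsym hmgi (hrows.symm hammingDist_comm)
        (by rwa [hammingDist_comm]) t β β']

lemma mul_eq_zero_of_hammingDist_eq_one (hmgi : MGI Γ) (hs : hammingDist σ τ = 1)
    (t : Fin (m + 1)) {x : (Fin m → Fin ℓ → Bool) → Fin 2 → ℂ}
    (hx : ∀ β, x β = ![Γ (t.insertNth σ β), Γ (t.insertNth τ β)]) {ζ η : Fin m → Fin ℓ → Bool}
    (hcols : IsMinIndepPair ℂ x (hammingDist on uncurry) ζ η)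
    (hd : 2 ≤ hammingDist (uncurry ζ) (uncurry η)) :
    Γ (t.insertNth σ ζ) * Γ (t.insertNth τ η) = 0 := by
  obtain ⟨i, hi⟩ := ne_iff.1 (hammingDist_pos.1 (by omega : 0 < hammingDist σ τ))
  refine hmgi.mul_eq_zero_of_terms_eq_zero (q := (t, i)) (by simpa using hi) ?_
  rintro ⟨j, k⟩ hp hne
  rw [insertNth_flipBlock_self, flipBit_eq_of_hammingDist_eq_one hi hs]
  rcases t.eq_self_or_eq_succAbove j with rfl | ⟨j, rfl⟩
  · exact absurd (congrArg (Prod.mk j) (eq_of_hammingDist_eq_one hs hi (by simpa using hp))) hne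
  rw [insertNth_flipBlock_succAbove]
  have hζη : ζ j k ≠ η j k := by simpa using hp
  have h1 := hammingDist_flipBit_self (uncurry ζ) (j, k)
  have h2 := hammingDist_flipBit_add_one (x := uncurry ζ) (y := uncurry η)
    (i := (j, k)) hζη
  have hzero : x (flipBlock ζ j (unit k)) = 0 := by
    apply hcols.eq_zero <;> simp only [onFun, uncurry_flipBlock_unit] <;> omega
  simpa [hx] using congrFun hzero 1

theorem hammingDist_uncurry_eq_one (hsym : BlockSym Γ) (hmgi : MGI Γ)
    (hrows : IsMinIndepPair ℂ (matrixForm Γ) hammingDist σ τ) (t : Fin (m + 1))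
    {x : (Fin m → Fin ℓ → Bool) → Fin 2 → ℂ}
    (hx : ∀ β, x β = ![Γ (t.insertNth σ β), Γ (t.insertNth τ β)]) {ζ η : Fin m → Fin ℓ → Bool}
    (hcols : IsMinIndepPair ℂ x (hammingDist on uncurry) ζ η) :
    hammingDist (uncurry ζ) (uncurry η) = 1 := by
  have hd : 0 < hammingDist (uncurry ζ) (uncurry η) :=
    hammingDist_pos.2 fun h => hcols.ne (by simpa using congrArg curry h)
  have hs_pos : 0 < hammingDist σ τ := hammingDist_pos.2 hrows.ne
  by_contra hd1
  have hdet := (linearIndependent_pair_fin_two_iff _ _ _ _).1 (hx ζ ▸ hx η ▸ hcols.1)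
  apply hdet
  rcases (by omega : hammingDist σ τ = 1 ∨ 2 ≤ hammingDist σ τ) with hs | hs
  · rw [mul_eq_zero_of_hammingDist_eq_one hmgi hs t hx hcols (by omega),
      mul_comm (Γ (t.insertNth τ ζ)), mul_eq_zero_of_hammingDist_eq_one hmgi hs t hx
        (hcols.symm fun _ _ => hammingDist_comm _ _) (by rw [hammingDist_comm]; omega), sub_zero]
  · rw [mul_eq_mul_of_two_le_hammingDist hsym hmgi hrows hs, mul_comm, sub_self]

end Core

theorem stmt3_general (n ℓ : ℕ)
    (Γ : (Fin n → Fin ℓ → Bool) → ℂ)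
    (hsym : BlockSym Γ) (hmgi : MGI Γ)
    (σ τ : Fin ℓ → Bool)
    (hind : LinearIndependent ℂ ![matrixForm Γ σ, matrixForm Γ τ])
    (hmin : ∀ u v : Fin ℓ → Bool,
      LinearIndependent ℂ ![matrixForm Γ u, matrixForm Γ v] →
      wt (bxor σ τ) ≤ wt (bxor u v))
    (t : Fin n)
    (x : (Fin (n - 1) → Fin ℓ → Bool) → Fin 2 → ℂ)
    (hx : ∀ β, x β = ![Γ (insertAt t σ β), Γ (insertAt t τ β)])
    (ζ η : Fin (n - 1) → Fin ℓ → Bool)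
    (hζη : LinearIndependent ℂ ![x ζ, x η])
    (hmin2 : ∀ u v : Fin (n - 1) → Fin ℓ → Bool,
      LinearIndependent ℂ ![x u, x v] → wtB (bxorB ζ η) ≤ wtB (bxorB u v)) :
    wtB (bxorB ζ η) = 1 := by
  obtain ⟨m, rfl⟩ : ∃ m, n = m + 1 := ⟨n - 1, by have := t.pos; omega⟩
  have hrows : IsMinIndepPair ℂ (matrixForm Γ) hammingDist σ τ :=
    ⟨hind, fun u v h => by simpa only [wt_bxor_eq_hammingDist] using hmin u v h⟩
  have hcols : IsMinIndepPair ℂ x (hammingDist on uncurry) ζ η :=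
    ⟨hζη, fun u v h => by simpa only [wtB_bxorB_eq_hammingDist] using hmin2 u v h⟩
  rw [wtB_bxorB_eq_hammingDist]
  exact hammingDist_uncurry_eq_one hsym hmgi hrows t
    (fun β => by simp only [hx, insertAt_eq_insertNth]) hcols

/-- with `σ, τ` as in Statement 2 and `x_β = (Γ(⋯σ⋯), Γ(⋯τ⋯))` (the chosen
block inserted in position `t`), a weight-minimal pair `ζ, η` with `x_ζ, x_η` linearly
independent differs in exactly one bit. -/
theorem stmt3 (n ℓ : ℕ) (hn : 2 ≤ n) (hℓ : 1 ≤ ℓ)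
    (Γ : (Fin n → Fin ℓ → Bool) → ℂ)
    (hsym : BlockSym Γ) (hpar : ParityCond Γ) (hmgi : MGI Γ)
    (hrank : 2 ≤ (matrixForm Γ).rank)
    (σ τ : Fin ℓ → Bool)
    (hind : LinearIndependent ℂ ![matrixForm Γ σ, matrixForm Γ τ])
    (hmin : ∀ u v : Fin ℓ → Bool,
      LinearIndependent ℂ ![matrixForm Γ u, matrixForm Γ v] →
      wt (bxor σ τ) ≤ wt (bxor u v))
    (t : Fin n)
    (x : (Fin (n - 1) → Fin ℓ → Bool) → Fin 2 → ℂ)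
    (hx : ∀ β, x β = ![Γ (insertAt t σ β), Γ (insertAt t τ β)])
    (ζ η : Fin (n - 1) → Fin ℓ → Bool)
    (hζη : LinearIndependent ℂ ![x ζ, x η])
    (hmin2 : ∀ u v : Fin (n - 1) → Fin ℓ → Bool,
      LinearIndependent ℂ ![x u, x v] → wtB (bxorB ζ η) ≤ wtB (bxorB u v)) :
    wtB (bxorB ζ η) = 1 :=
  stmt3_general n ℓ Γ hsym hmgi σ τ hind hmin t x hx ζ η hζη hmin2

end Matchgate
end

section
/- Let n ≥ 3, ℓ ≥ 1, and let Γ : ({0,1}^ℓ)^n → ℂ be a blockwise symmetric matchgate signature of arity nℓ whose matrix form M(Γ) has rank at least 3. Then there exist α_1, …, α_n ∈ {0,1}^ℓ and indices i < j in {1,…,ℓ} such that one of the following 2×2 submatrices of M(Γ) is nonsingular: (a) for some s < t in {1,…,ℓ}, the submatrix with rows α_1 and α_1+e_i+e_j and columns (α_2,α_3,…,α_n) and (α_2+e_s+e_t,α_3,…,α_n); or (b) for some s, t in {1,…,ℓ}, the submatrix with rows α_1 and α_1+e_i+e_j and columns (α_2,α_3,…,α_n) and (α_2+e_s,α_3+e_t,α_4,…,α_n).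 -/
open Finset

namespace Matchgate

section Lemmas
variable {n ℓ : ℕ}

def qle (a b : Fin n × Fin ℓ) : Prop := a.1 < b.1 ∨ (a.1 = b.1 ∧ a.2 ≤ b.2)

instance : ∀ a b : Fin n × Fin ℓ, Decidable (qle a b) := fun a b => by
  unfold qle; infer_instance

lemma qle_refl (a : Fin n × Fin ℓ) : qle a a := Or.inr ⟨rfl, le_refl _⟩

lemma qle_total (a b : Fin n × Fin ℓ) : qle a b ∨ qle b a := by
  unfold qle
  rcases lt_trichotomy a.1 b.1 with h | h | h
  · exact Or.inl (Or.inl h)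
  · rcases le_total a.2 b.2 with h2 | h2
    · exact Or.inl (Or.inr ⟨h, h2⟩)
    · exact Or.inr (Or.inr ⟨h.symm, h2⟩)
  · exact Or.inr (Or.inl h)

lemma qle_antisymm {a b : Fin n × Fin ℓ} (h1 : qle a b) (h2 : qle b a) : a = b := by
  rcases h1 with h1 | ⟨h1, h1'⟩ <;> rcases h2 with h2 | ⟨h2, h2'⟩
  · exact absurd h2 (not_lt.mpr h1.le)
  · exact absurd h1 (not_lt.mpr h2.le)
  · exact absurd h2 (not_lt.mpr h1.le)
  · exact Prod.ext h1 (le_antisymm h1' h2')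

lemma qle_row_col {a b : Fin n × Fin ℓ} (ha : (a.1 : ℕ) = 0) (hb : (b.1 : ℕ) ≠ 0) : qle a b := by
  left
  rw [Fin.lt_def, ha]
  omega

lemma not_qle_col_row {a b : Fin n × Fin ℓ} (ha : (a.1 : ℕ) = 0) (hb : (b.1 : ℕ) ≠ 0) :
    ¬ qle b a := by
  intro h
  rcases h with h | ⟨h, _⟩
  · rw [Fin.lt_def, ha] at h
    omega
  · exact hb (by rw [h, ha])

/-- pattern obtained from β by flipping positions in S -/
def pat (β : Fin n → Fin ℓ → Bool) (S : Finset (Fin n × Fin ℓ)) : Fin n → Fin ℓ → Bool :=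
  fun j i => Bool.xor (β j i) (decide ((j, i) ∈ S))

@[simp] lemma pat_empty (β : Fin n → Fin ℓ → Bool) : pat β ∅ = β := by
  funext j i; simp [pat]

lemma filter_qle_eq (P : Finset (Fin n × Fin ℓ)) (p : Fin n × Fin ℓ) :
    (P.filter fun q => q.1 < p.1 ∨ (q.1 = p.1 ∧ q.2 ≤ p.2)) = P.filter (fun q => qle q p) := by
  apply Finset.filter_congr; intro q _; simp [qle]

/-- sign of p within P -/
noncomputable def sg (P : Finset (Fin n × Fin ℓ)) (p : Fin n × Fin ℓ) : ℂ :=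
  (-1 : ℂ) ^ (P.filter fun q => qle q p).card

/-- Pivot expansion of the Matchgate Identities. -/
lemma L1 {Γ : (Fin n → Fin ℓ → Bool) → ℂ} (hmgi : MGI Γ) (β : Fin n → Fin ℓ → Bool)
    (P : Finset (Fin n × Fin ℓ)) (p0 : Fin n × Fin ℓ) (h0 : p0 ∈ P)
    (hmin : ∀ q ∈ P, q ≠ p0 → ¬ qle q p0) :
    Γ β * Γ (pat β P) =
      ∑ p ∈ P.erase p0, sg P p * (Γ (pat β (insert p0 {p})) * Γ (pat β ((P.erase p0).erase p))) := by
  have H := hmgi (pat β {p0}) P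
  rw [← Finset.add_sum_erase _ _ h0] at H
  have hfilt : (P.filter fun q => q.1 < p0.1 ∨ (q.1 = p0.1 ∧ q.2 ≤ p0.2)) = {p0} := by
    rw [filter_qle_eq]
    ext q
    simp only [Finset.mem_filter, Finset.mem_singleton]
    constructor
    · rintro ⟨hq, hle⟩
      by_contra hne
      exact hmin q hq hne hle
    · rintro rfl
      exact ⟨h0, qle_refl _⟩
  have hA : (fun j i => Bool.xor (pat β {p0} j i) (decide ((j, i) = p0))) = β := by
    funext j i
    by_cases h : (j, i) = p0 <;> simp [pat, h]
  have hB : (fun j i => Bool.xor (pat β {p0} j i)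
      (Bool.xor (decide ((j, i) ∈ P)) (decide ((j, i) = p0)))) = pat β P := by
    funext j i
    by_cases h : (j, i) = p0
    · simp [pat, h, h0]
    · simp [pat, h]
  rw [hfilt, hA, hB] at H
  simp only [Finset.card_singleton, pow_one] at H
  have Hsum : ∑ p ∈ P.erase p0,
      (-1 : ℂ) ^ (P.filter fun q => q.1 < p.1 ∨ (q.1 = p.1 ∧ q.2 ≤ p.2)).card *
        Γ (fun j i => Bool.xor (pat β {p0} j i) (decide ((j, i) = p))) *
        Γ (fun j i => Bool.xor (pat β {p0} j i)
            (Bool.xor (decide ((j, i) ∈ P)) (decide ((j, i) = p)))) =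
      ∑ p ∈ P.erase p0, sg P p * (Γ (pat β (insert p0 {p})) * Γ (pat β ((P.erase p0).erase p))) := by
    apply Finset.sum_congr rfl
    intro p hp
    have hpP : p ∈ P := Finset.mem_of_mem_erase hp
    have hpne : p ≠ p0 := Finset.ne_of_mem_erase hp
    have e1 : (fun j i => Bool.xor (pat β {p0} j i) (decide ((j, i) = p))) =
        pat β (insert p0 {p}) := by
      funext j i
      by_cases h1 : (j, i) = p0 <;> by_cases h2 : (j, i) = p <;>
        simp_all [pat]
    have e2 : (fun j i => Bool.xor (pat β {p0} j i)
        (Bool.xor (decide ((j, i) ∈ P)) (decide ((j, i) = p)))) =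
        pat β ((P.erase p0).erase p) := by
      funext j i
      by_cases h1 : (j, i) = p0 <;> by_cases h2 : (j, i) = p <;>
        by_cases h3 : (j, i) ∈ P <;> simp_all [pat]
    rw [e1, e2, filter_qle_eq]
    unfold sg
    ring
  rw [Hsum] at H
  linear_combination -H

/-- Second expansion shape: base shifted by a position not in P. -/
lemma L2 {Γ : (Fin n → Fin ℓ → Bool) → ℂ} (hmgi : MGI Γ) (β : Fin n → Fin ℓ → Bool)
    (Y : Finset (Fin n × Fin ℓ)) (p0 : Fin n × Fin ℓ) (h0 : p0 ∉ Y) :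
    ∑ q ∈ Y, sg Y q * (Γ (pat β (insert p0 {q})) * Γ (pat β (insert p0 (Y.erase q)))) = 0 := by
  have H := hmgi (pat β {p0}) Y
  rw [← H]
  apply Finset.sum_congr rfl
  intro q hq
  have hqne : q ≠ p0 := fun h => h0 (h ▸ hq)
  have e1 : (fun j i => Bool.xor (pat β {p0} j i) (decide ((j, i) = q))) =
      pat β (insert p0 {q}) := by
    funext j i
    by_cases h1 : (j, i) = p0 <;> by_cases h2 : (j, i) = q <;> simp_all [pat]
  have e2 : (fun j i => Bool.xor (pat β {p0} j i)
      (Bool.xor (decide ((j, i) ∈ Y)) (decide ((j, i) = q)))) =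
      pat β (insert p0 (Y.erase q)) := by
    funext j i
    by_cases h1 : (j, i) = p0 <;> by_cases h2 : (j, i) = q <;>
      by_cases h3 : (j, i) ∈ Y <;> simp_all [pat]
  rw [e1, e2, filter_qle_eq]
  unfold sg
  ring


lemma wtB_zmod (α : Fin n → Fin ℓ → Bool) :
    ((wtB α : ZMod 2)) = ∑ p : Fin n × Fin ℓ, (if α p.1 p.2 then (1 : ZMod 2) else 0) := by
  unfold wtB wt
  push_cast
  rw [Fintype.sum_prod_type]
  apply Finset.sum_congr rfl
  intro j _
  rw [Finset.card_filter]
  push_cast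
  apply Finset.sum_congr rfl
  intro i _
  by_cases h : α j i <;> simp [h]

lemma wtB_pat (β : Fin n → Fin ℓ → Bool) (S : Finset (Fin n × Fin ℓ)) :
    ((wtB (pat β S) : ZMod 2)) = (wtB β : ZMod 2) + (S.card : ZMod 2) := by
  rw [wtB_zmod, wtB_zmod]
  have : ∀ p : Fin n × Fin ℓ, (if pat β S p.1 p.2 then (1 : ZMod 2) else 0) =
      (if β p.1 p.2 then (1 : ZMod 2) else 0) + (if p ∈ S then 1 else 0) := by
    intro p
    by_cases h1 : β p.1 p.2 <;> by_cases h2 : p ∈ S <;> simp [pat, h1, h2] <;> decide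
  rw [Finset.sum_congr rfl (fun p _ => this p), Finset.sum_add_distrib]
  congr 1
  rw [Finset.sum_ite_mem, Finset.univ_inter, Finset.sum_const, nsmul_eq_mul, mul_one]

lemma natmod2 (a b : ℕ) (h : (a : ZMod 2) = (b : ZMod 2)) : a % 2 = b % 2 := by
  have := (ZMod.natCast_eq_natCast_iff a b 2).mp h
  exact this

lemma podd {Γ : (Fin n → Fin ℓ → Bool) → ℂ} (hpar : ParityCond Γ)
    (β : Fin n → Fin ℓ → Bool) (hβ : Γ β ≠ 0) (S : Finset (Fin n × Fin ℓ))
    (hS : S.card % 2 = 1) : Γ (pat β S) = 0 := by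
  have hcast : ((S.card : ZMod 2)) = 1 := by
    rw [← ZMod.natCast_mod, hS]; norm_num
  have key : wtB (pat β S) % 2 = (wtB β + 1) % 2 := by
    apply natmod2
    rw [wtB_pat, hcast]
    push_cast
    ring
  rcases hpar with hp | hp
  · -- even entries vanish; Γ β ≠ 0 means wtB β % 2 = 1
    have hb : wtB β % 2 = 1 := by
      rcases Nat.mod_two_eq_zero_or_one (wtB β) with h | h
      · exact absurd (hp β h) hβ
      · exact h
    apply hp
    omega
  · have hb : wtB β % 2 = 0 := by
      rcases Nat.mod_two_eq_zero_or_one (wtB β) with h | h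
      · exact h
      · exact absurd (hp β h) hβ
    apply hp
    omega


lemma flip_comp (σ : Equiv.Perm (Fin n)) (j k : Fin n) (hjk : σ j = k)
    (α : Fin n → Fin ℓ → Bool) (c : Fin ℓ → Bool) :
    (flipBlock α k c) ∘ σ = flipBlock (α ∘ σ) j c := by
  funext j'
  simp only [Function.comp_apply, flipBlock, Function.update_apply]
  by_cases h : j' = j
  · subst h
    rw [if_pos hjk, if_pos rfl, hjk]
  · have h2 : σ j' ≠ k := by
      rw [← hjk]
      exact fun hh => h (σ.injective hh)
    rw [if_neg h2, if_neg h]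

lemma flip_pat1 (α : Fin n → Fin ℓ → Bool) (k : Fin n) (s : Fin ℓ) :
    flipBlock α k (unit s) = pat α {(k, s)} := by
  funext j i
  by_cases h : j = k
  · subst h
    by_cases h1 : i = s <;>
      simp [flipBlock, Function.update_apply, pat, bxor, unit, Prod.ext_iff, h1]
  · simp [flipBlock, Function.update_apply, pat, bxor, unit, Prod.ext_iff, h]

lemma flip_pat2 (α : Fin n → Fin ℓ → Bool) (k : Fin n) {s t : Fin ℓ} (hst : s ≠ t) :
    flipBlock α k (bxor (unit s) (unit t)) = pat α {(k, s), (k, t)} := by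
  funext j i
  by_cases h : j = k
  · subst h
    by_cases h1 : i = s
    · subst h1
      simp [flipBlock, Function.update_apply, pat, bxor, unit, Prod.ext_iff, hst]
    · have hts : t ≠ s := fun hh => hst hh.symm
      by_cases h2 : i = t
      · subst h2
        simp [flipBlock, Function.update_apply, pat, bxor, unit, Prod.ext_iff, h1, hts]
      · simp [flipBlock, Function.update_apply, pat, bxor, unit, Prod.ext_iff, h1, h2]
  · simp [flipBlock, Function.update_apply, pat, bxor, unit, Prod.ext_iff, h]

lemma pat_pat (α : Fin n → Fin ℓ → Bool) (S T : Finset (Fin n × Fin ℓ))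
    (hd : ∀ p ∈ S, p ∉ T) : pat (pat α S) T = pat α (S ∪ T) := by
  funext j i
  simp only [pat, Finset.mem_union]
  by_cases h1 : (j, i) ∈ S
  · have h2 : (j, i) ∉ T := hd _ h1
    simp [h1, h2]
  · by_cases h2 : (j, i) ∈ T <;> simp [h1, h2]


variable {Γ : (Fin n → Fin ℓ → Bool) → ℂ}

lemma H0same (hsym : BlockSym Γ) (z o : Fin n) (hz : (z : ℕ) = 0) (ho : (o : ℕ) = 1)
    (hna : ∀ (α : Fin n → Fin ℓ → Bool) (i j : Fin ℓ), i < j → ∀ (s t : Fin ℓ), s < t →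
      Γ α * Γ (flipBlock (flipBlock α z (bxor (unit i) (unit j))) o (bxor (unit s) (unit t))) =
        Γ (flipBlock α o (bxor (unit s) (unit t))) * Γ (flipBlock α z (bxor (unit i) (unit j))))
    (α : Fin n → Fin ℓ → Bool) (i j : Fin ℓ) (hij : i < j) (k : Fin n) (hk : (k : ℕ) ≠ 0)
    (s t : Fin ℓ) (hst : s < t) :
    Γ α * Γ (pat α (({(z, i), (z, j)} : Finset (Fin n × Fin ℓ)) ∪ {(k, s), (k, t)})) =
      Γ (pat α {(k, s), (k, t)}) * Γ (pat α {(z, i), (z, j)}) := by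
  have hzo : z ≠ o := fun h => by rw [h] at hz; omega
  have hzk : z ≠ k := fun h => hk (by rw [← h]; exact hz)
  set σ := Equiv.swap o k with hσ
  have hσo : σ o = k := Equiv.swap_apply_left o k
  have hσz : σ z = z := Equiv.swap_apply_of_ne_of_ne hzo hzk
  have h1 := hna (α ∘ σ) i j hij s t hst
  have t1 := flip_comp σ o k hσo α (bxor (unit s) (unit t))
  have t2 := flip_comp σ z z hσz α (bxor (unit i) (unit j))
  have t3 := flip_comp σ o k hσo (flipBlock α z (bxor (unit i) (unit j)))
    (bxor (unit s) (unit t))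
  rw [t2] at t3
  rw [← t3, ← t1, ← t2, hsym, hsym, hsym, hsym] at h1
  rw [flip_pat2 α z (ne_of_lt hij), flip_pat2 α k (ne_of_lt hst),
    flip_pat2 (pat α {(z, i), (z, j)}) k (ne_of_lt hst),
    pat_pat α {(z, i), (z, j)} {(k, s), (k, t)} (by
      intro r hr hr2
      simp only [Finset.mem_insert, Finset.mem_singleton] at hr hr2
      rcases hr with rfl | rfl <;> rcases hr2 with h' | h' <;>
        exact hzk (congrArg Prod.fst h'))] at h1
  exact h1

lemma H0cross (hsym : BlockSym Γ) (z o tw : Fin n) (hz : (z : ℕ) = 0) (ho : (o : ℕ) = 1) (htw : (tw : ℕ) = 2)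
    (hnb : ∀ (α : Fin n → Fin ℓ → Bool) (i j : Fin ℓ), i < j → ∀ (s t : Fin ℓ),
      Γ α * Γ (flipBlock (flipBlock (flipBlock α z (bxor (unit i) (unit j))) o (unit s))
          tw (unit t)) =
        Γ (flipBlock (flipBlock α o (unit s)) tw (unit t)) *
          Γ (flipBlock α z (bxor (unit i) (unit j))))
    (α : Fin n → Fin ℓ → Bool) (i j : Fin ℓ) (hij : i < j) (k1 k2 : Fin n)
    (hk1 : (k1 : ℕ) ≠ 0) (hk2 : (k2 : ℕ) ≠ 0) (hkk : k1 ≠ k2) (s t : Fin ℓ) :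
    Γ α * Γ (pat α ((({(z, i), (z, j)} : Finset (Fin n × Fin ℓ)) ∪ {(k1, s)}) ∪ {(k2, t)})) =
      Γ (pat α (({(k1, s)} : Finset (Fin n × Fin ℓ)) ∪ {(k2, t)})) *
        Γ (pat α {(z, i), (z, j)}) := by
  have hzo : z ≠ o := fun h => by rw [h] at hz; omega
  have hztw : z ≠ tw := fun h => by rw [h] at hz; omega
  have hotw : o ≠ tw := fun h => by rw [h] at ho; omega
  have hzk1 : z ≠ k1 := fun h => hk1 (by rw [← h]; exact hz)
  have hzk2 : z ≠ k2 := fun h => hk2 (by rw [← h]; exact hz)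
  set τ1 := Equiv.swap o k1 with hτ1
  set j2 := τ1 k2 with hj2
  have hτ1z : τ1 z = z := Equiv.swap_apply_of_ne_of_ne hzo hzk1
  have hτ1o : τ1 o = k1 := Equiv.swap_apply_left o k1
  have hτ1k1 : τ1 k1 = o := Equiv.swap_apply_right o k1
  have hj2o : j2 ≠ o := by
    rw [hj2, ← hτ1k1]
    exact fun h => hkk (τ1.injective h).symm
  have hj2z : j2 ≠ z := by
    rw [hj2, ← hτ1z]
    exact fun h => hzk2 (τ1.injective h).symm
  set τ2 := Equiv.swap tw j2 with hτ2
  set σ := τ2.trans τ1 with hσ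
  have hσapp : ∀ x, σ x = τ1 (τ2 x) := fun x => rfl
  have hσz : σ z = z := by
    rw [hσapp, Equiv.swap_apply_of_ne_of_ne hztw (fun h => hj2z h.symm), hτ1z]
  have hσo : σ o = k1 := by
    rw [hσapp, Equiv.swap_apply_of_ne_of_ne hotw (fun h => hj2o h.symm), hτ1o]
  have hσtw : σ tw = k2 := by
    rw [hσapp, Equiv.swap_apply_left, hj2, Equiv.swap_apply_self]
  have h1 := hnb (α ∘ σ) i j hij s t
  have tA := flip_comp σ z z hσz α (bxor (unit i) (unit j))
  have tB := flip_comp σ o k1 hσo (flipBlock α z (bxor (unit i) (unit j))) (unit s)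
  rw [tA] at tB
  have tC := flip_comp σ tw k2 hσtw
    (flipBlock (flipBlock α z (bxor (unit i) (unit j))) k1 (unit s)) (unit t)
  rw [tB] at tC
  have tD := flip_comp σ o k1 hσo α (unit s)
  have tE := flip_comp σ tw k2 hσtw (flipBlock α k1 (unit s)) (unit t)
  rw [tD] at tE
  rw [← tC, ← tE, ← tA, hsym, hsym, hsym, hsym] at h1
  have hz_ne : ∀ r : Fin n × Fin ℓ, r ∈ ({(z, i), (z, j)} : Finset (Fin n × Fin ℓ)) →
      r.1 = z := by
    intro r hr
    simp only [Finset.mem_insert, Finset.mem_singleton] at hr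
    rcases hr with rfl | rfl <;> rfl
  rw [flip_pat2 α z (ne_of_lt hij), flip_pat1 _ k1 s, flip_pat1 α k1 s,
    pat_pat α {(z, i), (z, j)} {(k1, s)} (by
      intro r hr hr2
      rw [Finset.mem_singleton] at hr2
      exact hzk1 ((hz_ne r hr) ▸ congrArg Prod.fst hr2)),
    flip_pat1 _ k2 t, flip_pat1 _ k2 t,
    pat_pat α ({(z, i), (z, j)} ∪ {(k1, s)}) {(k2, t)} (by
      intro r hr hr2
      rw [Finset.mem_singleton] at hr2
      rcases Finset.mem_union.mp hr with hr | hr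
      · exact hzk2 ((hz_ne r hr) ▸ congrArg Prod.fst hr2)
      · rw [Finset.mem_singleton] at hr
        rw [hr] at hr2
        exact hkk (congrArg Prod.fst hr2)),
    pat_pat α {(k1, s)} {(k2, t)} (by
      intro r hr hr2
      rw [Finset.mem_singleton] at hr hr2
      rw [hr] at hr2
      exact hkk (congrArg Prod.fst hr2))] at h1
  exact h1


-- helpers
lemma disjRC {X Y : Finset (Fin n × Fin ℓ)} (hX : ∀ p ∈ X, (p.1 : ℕ) = 0)
    (hY : ∀ q ∈ Y, (q.1 : ℕ) ≠ 0) : Disjoint X Y := by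
  rw [Finset.disjoint_left]
  intro p hp hq
  exact hY p hq (hX p hp)

lemma sg_union_row {X Y : Finset (Fin n × Fin ℓ)} (hY : ∀ q ∈ Y, (q.1 : ℕ) ≠ 0)
    {p : Fin n × Fin ℓ} (hp : (p.1 : ℕ) = 0) : sg (X ∪ Y) p = sg X p := by
  unfold sg
  congr 2
  rw [Finset.filter_union]
  have : Y.filter (fun q => qle q p) = ∅ := by
    apply Finset.filter_eq_empty_iff.mpr
    intro q hq
    exact not_qle_col_row hp (hY q hq)
  rw [this, Finset.union_empty]

lemma sg_union_col {X Y : Finset (Fin n × Fin ℓ)} (hX : ∀ p ∈ X, (p.1 : ℕ) = 0)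
    (hd : Disjoint X Y) {q : Fin n × Fin ℓ} (hq : (q.1 : ℕ) ≠ 0) :
    sg (X ∪ Y) q = (-1 : ℂ) ^ X.card * sg Y q := by
  unfold sg
  rw [Finset.filter_union]
  have h1 : X.filter (fun r => qle r q) = X := by
    apply Finset.filter_eq_self.mpr
    intro r hr
    exact qle_row_col (hX r hr) hq
  rw [h1, Finset.card_union_of_disjoint (hd.mono_right (Finset.filter_subset _ _)), pow_add]

lemma erase_union_left (X Y : Finset (Fin n × Fin ℓ)) (p : Fin n × Fin ℓ) (hp : p ∉ Y) :
    (X ∪ Y).erase p = X.erase p ∪ Y := by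
  rw [Finset.erase_union_distrib, Finset.erase_eq_of_notMem hp]

lemma erase_union_right (X Y : Finset (Fin n × Fin ℓ)) (q : Fin n × Fin ℓ) (hq : q ∉ X) :
    (X ∪ Y).erase q = X ∪ Y.erase q := by
  rw [Finset.erase_union_distrib, Finset.erase_eq_of_notMem hq]

lemma min_pivot {X Y : Finset (Fin n × Fin ℓ)} (hX : ∀ p ∈ X, (p.1 : ℕ) = 0)
    (hY : ∀ q ∈ Y, (q.1 : ℕ) ≠ 0) {i1 : Fin n × Fin ℓ} (hi1 : i1 ∈ X)
    (hm : ∀ q ∈ X, i1.2 ≤ q.2) :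
    ∀ q, q ∈ X ∪ Y → q ≠ i1 → ¬ qle q i1 := by
  intro q hq hne
  rcases Finset.mem_union.mp hq with h | h
  · intro hle
    have e1 : q.1 = i1.1 := Fin.ext (by rw [hX q h, hX i1 hi1])
    rcases hle with hlt | ⟨_, hle2⟩
    · rw [e1] at hlt
      exact lt_irrefl _ hlt
    · exact hne (Prod.ext e1 (le_antisymm hle2 (hm q h)))
  · exact not_qle_col_row (hX i1 hi1) (hY q h)

lemma star0 {Γ : (Fin n → Fin ℓ → Bool) → ℂ} (hmgi : MGI Γ) (β0 : Fin n → Fin ℓ → Bool)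
    (hβ0 : Γ β0 ≠ 0)
    (hcr0 : ∀ p q : Fin n × Fin ℓ, (p.1 : ℕ) = 0 → (q.1 : ℕ) ≠ 0 → Γ (pat β0 {p, q}) = 0) :
    ∀ (N : ℕ) (X Y : Finset (Fin n × Fin ℓ)), (∀ p ∈ X, (p.1 : ℕ) = 0) →
      (∀ q ∈ Y, (q.1 : ℕ) ≠ 0) → X.card + Y.card = N →
      Γ β0 * Γ (pat β0 (X ∪ Y)) = Γ (pat β0 X) * Γ (pat β0 Y) := by
  intro N
  induction N using Nat.strong_induction_on with
  | _ N IH =>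
  intro X Y hX hY hN
  rcases X.eq_empty_or_nonempty with rfl | hXne
  · simp
  obtain ⟨i1, hi1X, hi1min⟩ := Finset.exists_min_image X Prod.snd hXne
  have hi1r : (i1.1 : ℕ) = 0 := hX i1 hi1X
  have hi1nY : i1 ∉ Y := fun h => hY i1 h hi1r
  have hd1 : Disjoint (X.erase i1) Y :=
    disjRC (fun p hp => hX p (Finset.mem_of_mem_erase hp)) hY
  have hkey := L1 hmgi β0 (X ∪ Y) i1 (Finset.mem_union_left _ hi1X)
    (min_pivot hX hY hi1X hi1min)
  rw [erase_union_left X Y i1 hi1nY, Finset.sum_union hd1] at hkey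
  have hsum2 : ∑ q ∈ Y, sg (X ∪ Y) q *
      (Γ (pat β0 (insert i1 {q})) * Γ (pat β0 (((X.erase i1) ∪ Y).erase q))) = 0 := by
    apply Finset.sum_eq_zero
    intro q hq
    rw [hcr0 i1 q hi1r (hY q hq)]
    ring
  rw [hsum2, add_zero] at hkey
  have hsum1 : ∑ p ∈ X.erase i1, sg (X ∪ Y) p *
      (Γ (pat β0 (insert i1 {p})) * Γ (pat β0 (((X.erase i1) ∪ Y).erase p))) =
      ∑ p ∈ X.erase i1, sg X p *
      (Γ (pat β0 (insert i1 {p})) * Γ (pat β0 (((X.erase i1).erase p) ∪ Y))) := by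
    apply Finset.sum_congr rfl
    intro p hp
    have hpX : p ∈ X := Finset.mem_of_mem_erase hp
    have hpnY : p ∉ Y := fun h => hY p h (hX p hpX)
    rw [sg_union_row hY (hX p hpX), erase_union_left _ Y p hpnY]
  rw [hsum1] at hkey
  have main : Γ β0 * (Γ β0 * Γ (pat β0 (X ∪ Y))) = Γ β0 * (Γ (pat β0 X) * Γ (pat β0 Y)) := by
    rw [hkey, Finset.mul_sum]
    have step : ∀ p ∈ X.erase i1,
        Γ β0 * (sg X p * (Γ (pat β0 (insert i1 {p})) * Γ (pat β0 (((X.erase i1).erase p) ∪ Y)))) =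
        (sg X p * (Γ (pat β0 (insert i1 {p})) * Γ (pat β0 ((X.erase i1).erase p)))) *
          Γ (pat β0 Y) := by
      intro p hp
      have hpX : p ∈ X := Finset.mem_of_mem_erase hp
      have hih := IH (((X.erase i1).erase p).card + Y.card)
        (by
          have h1 : ((X.erase i1).erase p).card = X.card - 2 := by
            rw [Finset.card_erase_of_mem hp, Finset.card_erase_of_mem hi1X]
            omega
          have h2 : 2 ≤ X.card := by
            have := Finset.card_erase_of_mem hi1X
            have hne : (X.erase i1).Nonempty := ⟨p, hp⟩
            have := Finset.card_pos.mpr hne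
            omega
          omega)
        ((X.erase i1).erase p) Y
        (fun r hr => hX r (Finset.mem_of_mem_erase (Finset.mem_of_mem_erase hr))) hY rfl
      linear_combination (sg X p * Γ (pat β0 (insert i1 {p}))) * hih
    rw [Finset.sum_congr rfl step, ← Finset.sum_mul,
      ← L1 hmgi β0 X i1 hi1X (fun q hq => min_pivot hX hY hi1X hi1min q
        (Finset.mem_union_left _ hq))]
    ring
  exact mul_left_cancel₀ hβ0 main


lemma star {Γ : (Fin n → Fin ℓ → Bool) → ℂ} (hmgi : MGI Γ) (hpar : ParityCond Γ)
    (β0 : Fin n → Fin ℓ → Bool) (hβ0 : Γ β0 ≠ 0) (i0 s0 : Fin n × Fin ℓ)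
    (hi0 : (i0.1 : ℕ) = 0) (hs0 : (s0.1 : ℕ) ≠ 0)
    (hc : Γ (pat β0 {i0, s0}) ≠ 0)
    (hCR : ∀ p q : Fin n × Fin ℓ, (p.1 : ℕ) = 0 → (q.1 : ℕ) ≠ 0 →
      Γ (pat β0 {i0, s0}) * Γ (pat β0 {p, q}) = Γ (pat β0 {p, s0}) * Γ (pat β0 {i0, q})) :
    ∀ (N : ℕ) (X Y : Finset (Fin n × Fin ℓ)), (∀ p ∈ X, (p.1 : ℕ) = 0) →
      (∀ q ∈ Y, (q.1 : ℕ) ≠ 0) → X.card + Y.card = N →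
      Γ (pat β0 {i0, s0}) * (Γ β0 * Γ (pat β0 (X ∪ Y))) =
        Γ (pat β0 {i0, s0}) * (Γ (pat β0 X) * Γ (pat β0 Y)) +
          Γ β0 * (Γ (pat β0 (X ∪ {s0})) * Γ (pat β0 ({i0} ∪ Y))) := by
  intro N
  induction N using Nat.strong_induction_on with
  | _ N IH =>
  intro X Y hX hY hN
  set c := Γ (pat β0 {i0, s0}) with hcdef
  rcases X.eq_empty_or_nonempty with rfl | hXne
  · have h0 : Γ (pat β0 {s0}) = 0 := podd hpar β0 hβ0 {s0} (by simp)
    simp only [Finset.empty_union, pat_empty, h0]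
    ring
  obtain ⟨i1, hi1X, hi1min⟩ := Finset.exists_min_image X Prod.snd hXne
  have hi1r : (i1.1 : ℕ) = 0 := hX i1 hi1X
  have hi1nY : i1 ∉ Y := fun h => hY i1 h hi1r
  have hi1ns0 : i1 ∉ ({s0} : Finset _) := by
    simp only [Finset.mem_singleton]
    intro h
    exact hs0 (by rw [← h, hi1r])
  have hi0nY : i0 ∉ Y := fun h => hY i0 h hi0
  have hs0X : ∀ q ∈ ({s0} : Finset (Fin n × Fin ℓ)), (q.1 : ℕ) ≠ 0 := by
    intro q hq
    rw [Finset.mem_singleton] at hq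
    rw [hq]
    exact hs0
  have hi0X : ∀ p ∈ ({i0} : Finset (Fin n × Fin ℓ)), (p.1 : ℕ) = 0 := by
    intro p hp
    rw [Finset.mem_singleton] at hp
    rw [hp]
    exact hi0
  set X1 := X.erase i1 with hX1def
  have hX1rows : ∀ p ∈ X1, (p.1 : ℕ) = 0 := fun p hp => hX p (Finset.mem_of_mem_erase hp)
  have hd1 : Disjoint X1 Y := disjRC hX1rows hY
  have hd1s : Disjoint X1 ({s0} : Finset _) := disjRC hX1rows hs0X
  have hcardX : 1 ≤ X.card := Finset.card_pos.mpr hXne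
  have hX1card : X1.card = X.card - 1 := Finset.card_erase_of_mem hi1X
  -- GP1
  have hkey := L1 hmgi β0 (X ∪ Y) i1 (Finset.mem_union_left _ hi1X)
    (min_pivot hX hY hi1X hi1min)
  rw [erase_union_left X Y i1 hi1nY, Finset.sum_union hd1] at hkey
  have hkey1 : ∑ p ∈ X1, sg (X ∪ Y) p *
      (Γ (pat β0 (insert i1 {p})) * Γ (pat β0 ((X1 ∪ Y).erase p))) =
      ∑ p ∈ X1, sg X p * (Γ (pat β0 (insert i1 {p})) * Γ (pat β0 ((X1.erase p) ∪ Y))) := by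
    apply Finset.sum_congr rfl
    intro p hp
    have hpX : p ∈ X := Finset.mem_of_mem_erase hp
    have hpnY : p ∉ Y := fun h => hY p h (hX p hpX)
    rw [sg_union_row hY (hX p hpX), erase_union_left _ Y p hpnY]
  have hkey2 : ∑ q ∈ Y, sg (X ∪ Y) q *
      (Γ (pat β0 (insert i1 {q})) * Γ (pat β0 ((X1 ∪ Y).erase q))) =
      ∑ q ∈ Y, ((-1 : ℂ) ^ X.card * sg Y q) *
        (Γ (pat β0 (insert i1 {q})) * Γ (pat β0 (X1 ∪ Y.erase q))) := by
    apply Finset.sum_congr rfl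
    intro q hq
    have hqnX1 : q ∉ X1 := fun h => hY q hq (hX1rows q h)
    rw [sg_union_col hX (disjRC hX hY) (hY q hq), erase_union_right X1 Y q hqnX1]
  rw [hkey1, hkey2] at hkey
  -- GP2
  have hA1 := L1 hmgi β0 X i1 hi1X
    (fun q hq => min_pivot hX hY hi1X hi1min q (Finset.mem_union_left _ hq))
  rw [← hX1def] at hA1
  -- GP3
  have hA2 := L1 hmgi β0 (X ∪ {s0}) i1 (Finset.mem_union_left _ hi1X)
    (min_pivot hX hs0X hi1X hi1min)
  rw [erase_union_left X {s0} i1 hi1ns0, Finset.sum_union hd1s, Finset.sum_singleton] at hA2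
  have hA2a : ∑ p ∈ X1, sg (X ∪ {s0}) p *
      (Γ (pat β0 (insert i1 {p})) * Γ (pat β0 ((X1 ∪ {s0}).erase p))) =
      ∑ p ∈ X1, sg X p * (Γ (pat β0 (insert i1 {p})) * Γ (pat β0 ((X1.erase p) ∪ {s0}))) := by
    apply Finset.sum_congr rfl
    intro p hp
    have hpX : p ∈ X := Finset.mem_of_mem_erase hp
    have hpns : p ∉ ({s0} : Finset _) := by
      simp only [Finset.mem_singleton]
      intro h
      exact hs0 (by rw [← h, hX p hpX])
    rw [sg_union_row hs0X (hX p hpX), erase_union_left _ _ p hpns]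
  have hsgs0 : sg (X ∪ {s0}) s0 = (-1 : ℂ) ^ X.card * (-1 : ℂ) := by
    rw [sg_union_col hX (disjRC hX hs0X) hs0]
    congr 1
    unfold sg
    rw [Finset.filter_singleton, if_pos (qle_refl s0), Finset.card_singleton, pow_one]
  have hX1s0 : (X1 ∪ {s0}).erase s0 = X1 := by
    rw [erase_union_right X1 {s0} s0 (fun h => hs0 (hX1rows s0 h)), Finset.erase_singleton,
      Finset.union_empty]
  rw [hA2a, hsgs0, hX1s0] at hA2
  -- E_B
  have hBraw := L1 hmgi β0 ({i0} ∪ Y) i0 (Finset.mem_union_left _ (Finset.mem_singleton_self i0))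
    (min_pivot hi0X hY (Finset.mem_singleton_self i0) (by
      intro q hq
      rw [Finset.mem_singleton] at hq
      rw [hq]))
  have hYe : ({i0} ∪ Y).erase i0 = Y := by
    rw [Finset.erase_union_distrib, Finset.erase_singleton, Finset.erase_eq_of_notMem hi0nY,
      Finset.empty_union]
  rw [hYe] at hBraw
  have hB2 : Γ β0 * Γ (pat β0 ({i0} ∪ Y)) =
      -∑ q ∈ Y, sg Y q * (Γ (pat β0 (insert i0 {q})) * Γ (pat β0 (Y.erase q))) := by
    rw [hBraw, ← Finset.sum_neg_distrib]
    apply Finset.sum_congr rfl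
    intro q hq
    rw [sg_union_col hi0X (disjRC hi0X hY) (hY q hq), Finset.card_singleton, pow_one]
    ring
  -- E_D
  have hD := L2 hmgi β0 Y i0 hi0nY
  have hD2 : ∑ q ∈ Y, sg Y q * (Γ (pat β0 (insert i0 {q})) * Γ (pat β0 ({i0} ∪ Y.erase q))) = 0 := by
    rw [← hD]
    apply Finset.sum_congr rfl
    intro q hq
    rw [Finset.insert_eq i0 (Y.erase q)]
  -- summed IH transforms
  have hS1 : c * (Γ β0 * ∑ p ∈ X1, sg X p *
      (Γ (pat β0 (insert i1 {p})) * Γ (pat β0 ((X1.erase p) ∪ Y)))) =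
      c * (Γ (pat β0 Y) * ∑ p ∈ X1, sg X p *
        (Γ (pat β0 (insert i1 {p})) * Γ (pat β0 (X1.erase p)))) +
      Γ β0 * (Γ (pat β0 ({i0} ∪ Y)) * ∑ p ∈ X1, sg X p *
        (Γ (pat β0 (insert i1 {p})) * Γ (pat β0 ((X1.erase p) ∪ {s0})))) := by
    rw [Finset.mul_sum, Finset.mul_sum, Finset.mul_sum, Finset.mul_sum, Finset.mul_sum,
      Finset.mul_sum, ← Finset.sum_add_distrib]
    apply Finset.sum_congr rfl
    intro p hp
    have hpX1 : p ∈ X1 := hp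
    have hcards : (X1.erase p).card + Y.card < N := by
      have hp1 : (X1.erase p).card = X1.card - 1 := Finset.card_erase_of_mem hp
      have hppos : 0 < X1.card := Finset.card_pos.mpr ⟨p, hp⟩
      omega
    have hih := IH ((X1.erase p).card + Y.card) hcards (X1.erase p) Y
      (fun r hr => hX1rows r (Finset.mem_of_mem_erase hr)) hY rfl
    linear_combination (sg X p * Γ (pat β0 (insert i1 {p}))) * hih
  have hS2 : c * (c * (Γ β0 * ∑ q ∈ Y, ((-1 : ℂ) ^ X.card * sg Y q) *
      (Γ (pat β0 (insert i1 {q})) * Γ (pat β0 (X1 ∪ Y.erase q))))) =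
      (-1 : ℂ) ^ X.card * (c * (Γ (pat β0 (insert i1 {s0})) * Γ (pat β0 X1))) *
        (∑ q ∈ Y, sg Y q * (Γ (pat β0 (insert i0 {q})) * Γ (pat β0 (Y.erase q)))) +
      (-1 : ℂ) ^ X.card * (Γ β0 * (Γ (pat β0 (insert i1 {s0})) * Γ (pat β0 (X1 ∪ {s0})))) *
        (∑ q ∈ Y, sg Y q * (Γ (pat β0 (insert i0 {q})) * Γ (pat β0 ({i0} ∪ Y.erase q)))) := by
    rw [Finset.mul_sum, Finset.mul_sum, Finset.mul_sum, Finset.mul_sum, Finset.mul_sum,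
      ← Finset.sum_add_distrib]
    apply Finset.sum_congr rfl
    intro q hq
    have hqY : q ∈ Y := hq
    have hcards : X1.card + (Y.erase q).card < N := by
      rw [Finset.card_erase_of_mem hqY, hX1card]
      have := Finset.card_pos.mpr (⟨q, hq⟩ : Y.Nonempty)
      omega
    have hih := IH (X1.card + (Y.erase q).card) hcards X1 (Y.erase q) hX1rows
      (fun r hr => hY r (Finset.mem_of_mem_erase hr)) rfl
    have hcr := hCR i1 q hi1r (hY q hq)
    linear_combination ((-1 : ℂ) ^ X.card * sg Y q * c * Γ β0 * Γ (pat β0 (X1 ∪ Y.erase q))) * hcr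
      + ((-1 : ℂ) ^ X.card * sg Y q * Γ (pat β0 (insert i0 {q})) *
          Γ (pat β0 (insert i1 {s0}))) * hih
  -- assembly
  have main : c * (Γ β0 * (c * (Γ β0 * Γ (pat β0 (X ∪ Y))))) =
      c * (Γ β0 * (c * (Γ (pat β0 X) * Γ (pat β0 Y)) +
        Γ β0 * (Γ (pat β0 (X ∪ {s0})) * Γ (pat β0 ({i0} ∪ Y))))) := by
    linear_combination (c * c * Γ β0) * hkey + c * hS1 + hS2 -
      (c * c * Γ (pat β0 Y)) * hA1 -
      (c * Γ β0 * Γ (pat β0 ({i0} ∪ Y))) * hA2 +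
      ((-1 : ℂ) ^ X.card * c * (Γ (pat β0 (insert i1 {s0})) * Γ (pat β0 X1))) * hB2 +
      ((-1 : ℂ) ^ X.card * (Γ β0 * (Γ (pat β0 (insert i1 {s0})) * Γ (pat β0 (X1 ∪ {s0}))))) * hD2
  have step1 := mul_left_cancel₀ hc main
  exact mul_left_cancel₀ hβ0 step1



lemma H0full (hsym : BlockSym Γ) (z o tw : Fin n) (hz : (z : ℕ) = 0) (ho : (o : ℕ) = 1)
    (htw : (tw : ℕ) = 2)
    (hna : ∀ (α : Fin n → Fin ℓ → Bool) (i j : Fin ℓ), i < j → ∀ (s t : Fin ℓ), s < t →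
      Γ α * Γ (flipBlock (flipBlock α z (bxor (unit i) (unit j))) o (bxor (unit s) (unit t))) =
        Γ (flipBlock α o (bxor (unit s) (unit t))) * Γ (flipBlock α z (bxor (unit i) (unit j))))
    (hnb : ∀ (α : Fin n → Fin ℓ → Bool) (i j : Fin ℓ), i < j → ∀ (s t : Fin ℓ),
      Γ α * Γ (flipBlock (flipBlock (flipBlock α z (bxor (unit i) (unit j))) o (unit s))
          tw (unit t)) =
        Γ (flipBlock (flipBlock α o (unit s)) tw (unit t)) *
          Γ (flipBlock α z (bxor (unit i) (unit j)))) :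
    ∀ (α : Fin n → Fin ℓ → Bool) (i j : Fin ℓ), i ≠ j → ∀ p q : Fin n × Fin ℓ,
      (p.1 : ℕ) ≠ 0 → (q.1 : ℕ) ≠ 0 → p ≠ q →
      Γ α * Γ (pat α (({(z, i), (z, j)} : Finset (Fin n × Fin ℓ)) ∪ {p, q})) =
        Γ (pat α {p, q}) * Γ (pat α {(z, i), (z, j)}) := by
  have main : ∀ (α : Fin n → Fin ℓ → Bool) (i j : Fin ℓ), i < j → ∀ p q : Fin n × Fin ℓ,
      (p.1 : ℕ) ≠ 0 → (q.1 : ℕ) ≠ 0 → p ≠ q →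
      Γ α * Γ (pat α (({(z, i), (z, j)} : Finset (Fin n × Fin ℓ)) ∪ {p, q})) =
        Γ (pat α {p, q}) * Γ (pat α {(z, i), (z, j)}) := by
    intro α i j hij p q hp hq hpq
    by_cases hk : p.1 = q.1
    · have hst : p.2 ≠ q.2 := fun h => hpq (Prod.ext hk h)
      rcases hst.lt_or_gt with h | h
      · have hres := H0same hsym z o hz ho hna α i j hij p.1 hp p.2 q.2 h
        have e2 : (p.1, q.2) = q := by rw [hk]
        rw [Prod.mk.eta, e2] at hres
        exact hres
      · have hres := H0same hsym z o hz ho hna α i j hij q.1 hq q.2 p.2 h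
        have e2 : (q.1, p.2) = p := by rw [← hk]
        rw [Prod.mk.eta, e2, Finset.pair_comm q p] at hres
        exact hres
    · have hres := H0cross hsym z o tw hz ho htw hnb α i j hij p.1 q.1 hp hq
        (fun h => hk h) p.2 q.2
      simp only [Prod.mk.eta] at hres
      have e1 : ({p} : Finset (Fin n × Fin ℓ)) ∪ {q} = {p, q} := by
        ext r; simp
      rw [Finset.union_assoc, e1] at hres
      exact hres
  intro α i j hij p q hp hq hpq
  rcases hij.lt_or_gt with h | h
  · exact main α i j h p q hp hq hpq
  · have hres := main α j i h p q hp hq hpq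
    rw [Finset.pair_comm (z, j) (z, i)] at hres
    exact hres

set_option maxHeartbeats 1000000 in
lemma CRlem (hmgi : MGI Γ) (β0 : Fin n → Fin ℓ → Bool) (z : Fin n) (hz : (z : ℕ) = 0)
    (H0b : ∀ (i j : Fin ℓ), i ≠ j → ∀ p q : Fin n × Fin ℓ,
      (p.1 : ℕ) ≠ 0 → (q.1 : ℕ) ≠ 0 → p ≠ q →
      Γ β0 * Γ (pat β0 (({(z, i), (z, j)} : Finset (Fin n × Fin ℓ)) ∪ {p, q})) =
        Γ (pat β0 {p, q}) * Γ (pat β0 {(z, i), (z, j)}))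
    (p1 p2 p3 p4 : Fin n × Fin ℓ) (h1r : (p1.1 : ℕ) = 0) (h2r : (p2.1 : ℕ) = 0)
    (h12 : p1.2 < p2.2) (h3c : (p3.1 : ℕ) ≠ 0) (h4c : (p4.1 : ℕ) ≠ 0)
    (h34 : qle p3 p4) (hne34 : p3 ≠ p4) :
    Γ (pat β0 {p1, p3}) * Γ (pat β0 {p2, p4}) = Γ (pat β0 {p1, p4}) * Γ (pat β0 {p2, p3}) := by
  have h11 : p1.1 = p2.1 := Fin.ext (by rw [h1r, h2r])
  have h12ne : p1 ≠ p2 := fun h => absurd (congrArg Prod.snd h) (ne_of_lt h12)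
  have h13 : p1 ≠ p3 := fun h => h3c (by rw [← h]; exact h1r)
  have h14 : p1 ≠ p4 := fun h => h4c (by rw [← h]; exact h1r)
  have h23 : p2 ≠ p3 := fun h => h3c (by rw [← h]; exact h2r)
  have h24 : p2 ≠ p4 := fun h => h4c (by rw [← h]; exact h2r)
  have hq12 : qle p1 p2 := Or.inr ⟨h11, le_of_lt h12⟩
  have hnq21 : ¬ qle p2 p1 := by
    intro hle
    rcases hle with hlt | ⟨_, hle2⟩
    · rw [h11] at hlt
      exact lt_irrefl _ hlt
    · exact absurd h12 (not_lt.mpr hle2)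
  have hnq43 : ¬ qle p4 p3 := fun hle => hne34 ((by
    rcases h34 with hlt | ⟨he, hle2⟩ <;> rcases hle with hlt' | ⟨he', hle2'⟩
    · exact absurd hlt' (not_lt.mpr (le_of_lt hlt))
    · exact absurd hlt (by rw [he']; exact lt_irrefl _)
    · exact absurd hlt' (by rw [he]; exact lt_irrefl _)
    · exact Prod.ext he (le_antisymm hle2 hle2')) : p3 = p4)
  set P : Finset (Fin n × Fin ℓ) := insert p1 (insert p2 (insert p3 {p4})) with hP
  have hp1P : p1 ∈ P := by simp [hP]
  have hmin : ∀ q ∈ P, q ≠ p1 → ¬ qle q p1 := by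
    intro r hr hrne
    simp only [hP, Finset.mem_insert, Finset.mem_singleton] at hr
    rcases hr with rfl | rfl | rfl | rfl
    · exact absurd rfl hrne
    · exact hnq21
    · exact not_qle_col_row h1r h3c
    · exact not_qle_col_row h1r h4c
  have key := L1 hmgi β0 P p1 hp1P hmin
  have hPe : P.erase p1 = insert p2 (insert p3 {p4}) := by
    rw [hP]
    apply Finset.erase_insert
    simp only [Finset.mem_insert, Finset.mem_singleton]
    push_neg
    exact ⟨h12ne, h13, h14⟩
  rw [hPe] at key
  rw [Finset.sum_insert (by
      simp only [Finset.mem_insert, Finset.mem_singleton]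
      push_neg
      exact ⟨h23, h24⟩),
    Finset.sum_insert (by
      simp only [Finset.mem_singleton]
      exact hne34),
    Finset.sum_singleton] at key
  -- signs
  have hf2 : P.filter (fun r => qle r p2) = {p1, p2} := by
    ext r
    simp only [hP, Finset.mem_filter, Finset.mem_insert, Finset.mem_singleton]
    constructor
    · rintro ⟨rfl | rfl | rfl | rfl, hle⟩
      · exact Or.inl rfl
      · exact Or.inr rfl
      · exact absurd hle (not_qle_col_row h2r h3c)
      · exact absurd hle (not_qle_col_row h2r h4c)
    · rintro (rfl | rfl)
      · exact ⟨Or.inl rfl, hq12⟩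
      · exact ⟨Or.inr (Or.inl rfl), qle_refl _⟩
  have hf3 : P.filter (fun r => qle r p3) = {p1, p2, p3} := by
    ext r
    simp only [hP, Finset.mem_filter, Finset.mem_insert, Finset.mem_singleton]
    constructor
    · rintro ⟨rfl | rfl | rfl | rfl, hle⟩
      · exact Or.inl rfl
      · exact Or.inr (Or.inl rfl)
      · exact Or.inr (Or.inr rfl)
      · exact absurd hle hnq43
    · rintro (rfl | rfl | rfl)
      · exact ⟨Or.inl rfl, qle_row_col h1r h3c⟩
      · exact ⟨Or.inr (Or.inl rfl), qle_row_col h2r h3c⟩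
      · exact ⟨Or.inr (Or.inr (Or.inl rfl)), qle_refl _⟩
  have hf4 : P.filter (fun r => qle r p4) = P := by
    apply Finset.filter_eq_self.mpr
    intro r hr
    simp only [hP, Finset.mem_insert, Finset.mem_singleton] at hr
    rcases hr with rfl | rfl | rfl | rfl
    · exact qle_row_col h1r h4c
    · exact qle_row_col h2r h4c
    · exact h34
    · exact qle_refl _
  have hsg2 : sg P p2 = 1 := by
    unfold sg
    rw [hf2, Finset.card_insert_of_notMem (by simp [h12ne]), Finset.card_singleton]
    norm_num
  have hsg3 : sg P p3 = -1 := by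
    unfold sg
    rw [hf3, Finset.card_insert_of_notMem (by simp [h12ne, h13]),
      Finset.card_insert_of_notMem (by simp [h23]), Finset.card_singleton]
    norm_num
  have hsg4 : sg P p4 = 1 := by
    unfold sg
    rw [hf4, hP, Finset.card_insert_of_notMem (by simp [h12ne, h13, h14]),
      Finset.card_insert_of_notMem (by simp [h23, h24]),
      Finset.card_insert_of_notMem (by simp [hne34]), Finset.card_singleton]
    norm_num
  -- erased sets
  have he2 : Finset.erase (insert p2 (insert p3 ({p4} : Finset (Fin n × Fin ℓ)))) p2 = {p3, p4} := by
    apply Finset.erase_insert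
    simp only [Finset.mem_insert, Finset.mem_singleton]
    push_neg
    exact ⟨h23, h24⟩
  have he3 : Finset.erase (insert p2 (insert p3 ({p4} : Finset (Fin n × Fin ℓ)))) p3 = {p2, p4} := by
    rw [Finset.erase_insert_of_ne h23, Finset.erase_insert (by
      simp only [Finset.mem_singleton]
      exact hne34)]
  have he4 : Finset.erase (insert p2 (insert p3 ({p4} : Finset (Fin n × Fin ℓ)))) p4 = {p2, p3} := by
    rw [Finset.erase_insert_of_ne h24, Finset.erase_insert_of_ne hne34,
      Finset.erase_singleton]
    rfl
  rw [hsg2, hsg3, hsg4, he2, he3, he4] at key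
  -- H0b instance
  have hij : p1.2 ≠ p2.2 := ne_of_lt h12
  have h0 := H0b p1.2 p2.2 hij p3 p4 h3c h4c hne34
  have hz1 : (z, p1.2) = p1 := by
    have : p1.1 = z := Fin.ext (by rw [h1r, hz])
    rw [← this]
  have hz2 : (z, p2.2) = p2 := by
    have : p2.1 = z := Fin.ext (by rw [h2r, hz])
    rw [← this]
  rw [hz1, hz2] at h0
  have hup : ({p1, p2} : Finset (Fin n × Fin ℓ)) ∪ {p3, p4} = P := by
    ext r
    simp only [hP, Finset.mem_union, Finset.mem_insert, Finset.mem_singleton]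
    tauto
  rw [hup] at h0
  linear_combination key - h0

lemma CRfull (hmgi : MGI Γ) (β0 : Fin n → Fin ℓ → Bool) (z : Fin n) (hz : (z : ℕ) = 0)
    (H0b : ∀ (i j : Fin ℓ), i ≠ j → ∀ p q : Fin n × Fin ℓ,
      (p.1 : ℕ) ≠ 0 → (q.1 : ℕ) ≠ 0 → p ≠ q →
      Γ β0 * Γ (pat β0 (({(z, i), (z, j)} : Finset (Fin n × Fin ℓ)) ∪ {p, q})) =
        Γ (pat β0 {p, q}) * Γ (pat β0 {(z, i), (z, j)}))
    (a b u v : Fin n × Fin ℓ) (ha : (a.1 : ℕ) = 0) (hb : (b.1 : ℕ) = 0)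
    (hu : (u.1 : ℕ) ≠ 0) (hv : (v.1 : ℕ) ≠ 0) :
    Γ (pat β0 {a, u}) * Γ (pat β0 {b, v}) = Γ (pat β0 {a, v}) * Γ (pat β0 {b, u}) := by
  by_cases hab : a = b
  · subst hab
    ring
  by_cases huv : u = v
  · subst huv
    ring
  have hab2 : a.2 ≠ b.2 := by
    intro h
    exact hab (Prod.ext (Fin.ext (by rw [ha, hb])) h)
  rcases hab2.lt_or_gt with h | h
  · rcases qle_total u v with hq | hq
    · exact CRlem hmgi β0 z hz H0b a b u v ha hb h hu hv hq huv
    · have hres := CRlem hmgi β0 z hz H0b a b v u ha hb h hv hu hq (fun hh => huv hh.symm)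
      linear_combination -hres
  · rcases qle_total u v with hq | hq
    · have hres := CRlem hmgi β0 z hz H0b b a u v hb ha h hu hv hq huv
      linear_combination -hres
    · have hres := CRlem hmgi β0 z hz H0b b a v u hb ha h hv hu hq (fun hh => huv hh.symm)
      linear_combination hres


end Lemmas

set_option maxHeartbeats 2000000 in
/-- if `rank M(Γ) ≥ 3` (and `n ≥ 3`) then `M(Γ)` has a nonsingular `2×2`
submatrix whose rows differ by a double bit flip `e_i + e_j` in the first block and whose
columns differ either (a) by a double flip `e_s + e_t` in the second block, or (b) by
single flips `e_s` in the second block and `e_t` in the third block. -/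
theorem stmt7 (n ℓ : ℕ) (hn : 3 ≤ n) (hℓ : 1 ≤ ℓ)
    (Γ : (Fin n → Fin ℓ → Bool) → ℂ)
    (hsym : BlockSym Γ) (hpar : ParityCond Γ) (hmgi : MGI Γ)
    (hrank : 3 ≤ (matrixForm Γ).rank) :
    ∃ (α : Fin n → Fin ℓ → Bool) (i j : Fin ℓ), i < j ∧
      ((∃ s t : Fin ℓ, s < t ∧
          Matrix.det
            !![Γ α,
               Γ (flipBlock α ⟨1, by omega⟩ (bxor (unit s) (unit t)));
               Γ (flipBlock α ⟨0, by omega⟩ (bxor (unit i) (unit j))),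
               Γ (flipBlock (flipBlock α ⟨0, by omega⟩ (bxor (unit i) (unit j)))
                   ⟨1, by omega⟩ (bxor (unit s) (unit t)))] ≠ 0) ∨
       (∃ s t : Fin ℓ,
          Matrix.det
            !![Γ α,
               Γ (flipBlock (flipBlock α ⟨1, by omega⟩ (unit s)) ⟨2, by omega⟩ (unit t));
               Γ (flipBlock α ⟨0, by omega⟩ (bxor (unit i) (unit j))),
               Γ (flipBlock (flipBlock (flipBlock α ⟨0, by omega⟩ (bxor (unit i) (unit j)))
                   ⟨1, by omega⟩ (unit s)) ⟨2, by omega⟩ (unit t))] ≠ 0)) := by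
  classical
  by_contra hcon
  push_neg at hcon
  set z : Fin n := ⟨0, by omega⟩ with hzdef
  set o : Fin n := ⟨1, by omega⟩ with hodef
  set tw : Fin n := ⟨2, by omega⟩ with htwdef
  have hna : ∀ (α : Fin n → Fin ℓ → Bool) (i j : Fin ℓ), i < j → ∀ (s t : Fin ℓ), s < t →
      Γ α * Γ (flipBlock (flipBlock α z (bxor (unit i) (unit j))) o (bxor (unit s) (unit t))) =
        Γ (flipBlock α o (bxor (unit s) (unit t))) * Γ (flipBlock α z (bxor (unit i) (unit j))) := by
    intro α i j hij s t hst
    have h := (hcon α i j hij).1 s t hst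
    rw [Matrix.det_fin_two_of] at h
    exact sub_eq_zero.mp h
  have hnb : ∀ (α : Fin n → Fin ℓ → Bool) (i j : Fin ℓ), i < j → ∀ (s t : Fin ℓ),
      Γ α * Γ (flipBlock (flipBlock (flipBlock α z (bxor (unit i) (unit j))) o (unit s))
          tw (unit t)) =
        Γ (flipBlock (flipBlock α o (unit s)) tw (unit t)) *
          Γ (flipBlock α z (bxor (unit i) (unit j))) := by
    intro α i j hij s t
    have h := (hcon α i j hij).2 s t
    rw [Matrix.det_fin_two_of] at h
    exact sub_eq_zero.mp h
  have hMne : ∃ a b, Γ (cons0 a b) ≠ 0 := by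
    by_contra hM0
    push_neg at hM0
    have hzero : matrixForm Γ = 0 := by
      ext a b
      exact hM0 a b
    rw [hzero, Matrix.rank_zero] at hrank
    omega
  obtain ⟨a0, b0, hβ0⟩ := hMne
  set β0 : Fin n → Fin ℓ → Bool := cons0 a0 b0 with hβ0def
  have H0b := (H0full hsym z o tw rfl rfl rfl hna hnb) β0
  set Xs : (Fin ℓ → Bool) → Finset (Fin n × Fin ℓ) :=
    fun a => Finset.univ.filter (fun p => (p.1 : ℕ) = 0 ∧ a p.2 ≠ β0 p.1 p.2) with hXdef
  set Ys : (Fin (n - 1) → Fin ℓ → Bool) → Finset (Fin n × Fin ℓ) :=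
    fun b => Finset.univ.filter
      (fun p => (p.1 : ℕ) ≠ 0 ∧ cons0 a0 b p.1 p.2 ≠ β0 p.1 p.2) with hYdef
  have hXr : ∀ a, ∀ p ∈ Xs a, (p.1 : ℕ) = 0 := by
    intro a p hp
    rw [hXdef] at hp
    simp only [Finset.mem_filter] at hp
    exact hp.2.1
  have hYc : ∀ b, ∀ p ∈ Ys b, (p.1 : ℕ) ≠ 0 := by
    intro b p hp
    rw [hYdef] at hp
    simp only [Finset.mem_filter] at hp
    exact hp.2.1
  have hpatXY : ∀ a b, pat β0 (Xs a ∪ Ys b) = cons0 a b := by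
    intro a b
    funext j i
    by_cases hj : (j : ℕ) = 0
    · have hmem : ((j, i) ∈ Xs a ∪ Ys b) ↔ (a i ≠ β0 j i) := by
        rw [hXdef, hYdef]
        simp [hj]
      have hdec : decide ((j, i) ∈ Xs a ∪ Ys b) = decide (a i ≠ β0 j i) :=
        decide_eq_decide.mpr hmem
      have hcv : cons0 a b j i = a i := by simp [cons0, hj]
      show Bool.xor (β0 j i) (decide ((j, i) ∈ Xs a ∪ Ys b)) = cons0 a b j i
      rw [hdec, hcv]
      by_cases hab : a i = β0 j i
      · simp [hab]
      · cases hb : β0 j i <;> cases hai : a i <;> simp_all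
    · have hcc : cons0 a b j i = cons0 a0 b j i := by simp [cons0, hj]
      have hmem : ((j, i) ∈ Xs a ∪ Ys b) ↔ (cons0 a0 b j i ≠ β0 j i) := by
        rw [hXdef, hYdef]
        simp [hj]
      have hdec : decide ((j, i) ∈ Xs a ∪ Ys b) = decide (cons0 a0 b j i ≠ β0 j i) :=
        decide_eq_decide.mpr hmem
      show Bool.xor (β0 j i) (decide ((j, i) ∈ Xs a ∪ Ys b)) = cons0 a b j i
      rw [hdec, hcc]
      by_cases hab : cons0 a0 b j i = β0 j i
      · simp [hab]
      · cases hb : β0 j i <;> cases hai : cons0 a0 b j i <;> simp_all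
  by_cases hc0 : ∀ p q : Fin n × Fin ℓ, (p.1 : ℕ) = 0 → (q.1 : ℕ) ≠ 0 →
      Γ (pat β0 {p, q}) = 0
  · -- degenerate case: rank ≤ 1
    have hfac : ∀ a b, matrixForm Γ a b =
        Γ (pat β0 (Xs a)) * ((Γ β0)⁻¹ * Γ (pat β0 (Ys b))) := by
      intro a b
      have key := star0 hmgi β0 hβ0 hc0 ((Xs a).card + (Ys b).card) (Xs a) (Ys b)
        (hXr a) (hYc b) rfl
      rw [hpatXY a b] at key
      have hMc : matrixForm Γ a b = Γ (cons0 a b) := rfl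
      rw [hMc]
      field_simp
      linear_combination key
    set U : Matrix (Fin ℓ → Bool) (Fin 1) ℂ :=
      Matrix.of (fun a _ => Γ (pat β0 (Xs a))) with hU
    set V : Matrix (Fin 1) (Fin (n - 1) → Fin ℓ → Bool) ℂ :=
      Matrix.of (fun _ b => (Γ β0)⁻¹ * Γ (pat β0 (Ys b))) with hV
    have hUV : matrixForm Γ = U * V := by
      ext a b
      rw [Matrix.mul_apply, Fin.sum_univ_one]
      exact hfac a b
    have h1 : (matrixForm Γ).rank ≤ 1 := by
      rw [hUV]
      calc (U * V).rank ≤ V.rank := Matrix.rank_mul_le_right U V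
        _ ≤ Fintype.card (Fin 1) := Matrix.rank_le_card_height V
        _ = 1 := by simp
    omega
  · push_neg at hc0
    obtain ⟨i0, s0, hi0, hs0, hcne⟩ := hc0
    have hCR : ∀ p q : Fin n × Fin ℓ, (p.1 : ℕ) = 0 → (q.1 : ℕ) ≠ 0 →
        Γ (pat β0 {i0, s0}) * Γ (pat β0 {p, q}) =
          Γ (pat β0 {p, s0}) * Γ (pat β0 {i0, q}) := by
      intro p q hp hq
      have h := CRfull hmgi β0 z rfl H0b i0 p s0 q hi0 hp hs0 hq
      linear_combination h
    have hstar := star hmgi hpar β0 hβ0 i0 s0 hi0 hs0 hcne hCR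
    have hfac : ∀ a b, matrixForm Γ a b =
        Γ (pat β0 (Xs a)) * ((Γ β0)⁻¹ * Γ (pat β0 (Ys b))) +
          Γ (pat β0 (Xs a ∪ {s0})) *
            ((Γ (pat β0 {i0, s0}))⁻¹ * Γ (pat β0 ({i0} ∪ Ys b))) := by
      intro a b
      have key := hstar ((Xs a).card + (Ys b).card) (Xs a) (Ys b) (hXr a) (hYc b) rfl
      rw [hpatXY a b] at key
      have hMc : matrixForm Γ a b = Γ (cons0 a b) := rfl
      rw [hMc]
      field_simp
      linear_combination key
    set U : Matrix (Fin ℓ → Bool) (Fin 2) ℂ :=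
      Matrix.of (fun a k => if k = 0 then Γ (pat β0 (Xs a))
        else Γ (pat β0 (Xs a ∪ {s0}))) with hU
    set V : Matrix (Fin 2) (Fin (n - 1) → Fin ℓ → Bool) ℂ :=
      Matrix.of (fun k b => if k = 0 then (Γ β0)⁻¹ * Γ (pat β0 (Ys b))
        else (Γ (pat β0 {i0, s0}))⁻¹ * Γ (pat β0 ({i0} ∪ Ys b))) with hV
    have hUV : matrixForm Γ = U * V := by
      ext a b
      rw [Matrix.mul_apply, Fin.sum_univ_two]
      have e1 : U a 0 = Γ (pat β0 (Xs a)) := rfl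
      have e2 : U a 1 = Γ (pat β0 (Xs a ∪ {s0})) := rfl
      have e3 : V 0 b = (Γ β0)⁻¹ * Γ (pat β0 (Ys b)) := rfl
      have e4 : V 1 b = (Γ (pat β0 {i0, s0}))⁻¹ * Γ (pat β0 ({i0} ∪ Ys b)) := rfl
      rw [e1, e2, e3, e4]
      exact hfac a b
    have h1 : (matrixForm Γ).rank ≤ 2 := by
      rw [hUV]
      calc (U * V).rank ≤ V.rank := Matrix.rank_mul_le_right U V
        _ ≤ Fintype.card (Fin 2) := Matrix.rank_le_card_height V
        _ = 2 := by simp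
    omega

end Matchgate
end
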